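/- arXiv:2309.09258 — 5 statements merged into one kernel-verified Lean document; each statement's English description precedes it below -/
import Mathlib

section
/- Under the stated assumptions on σ and the data, for every j ∈ {1,…,p} and every W ∈ ℝ^{p×d}, the gradient of the regularized logistic risk with respect to row w_j satisfies: ‖∇_{w_j} L̃(W)‖₂² ≥ λ²‖w_j‖₂² − 2λ‖w_j‖₂ · |a_j| · M_D · B_x · ( 1/2 + ‖a‖₂ · (L·B_x·‖W‖_F + ‖c‖₂)/4 ). -/
open MeasureTheory Real Filter

noncomputable section

/-- The `j`-th row of a weight matrix `W ∈ ℝ^{p×d}` (Frobenius/Euclidean structure). -/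
def row {p d : ℕ} (W : EuclideanSpace ℝ (Fin p × Fin d)) (j : Fin p) :
    EuclideanSpace ℝ (Fin d) :=
  WithLp.toLp 2 (fun k => W (j, k))

/-- Replace the `j`-th row of `W` by `v`. -/
def updRow {p d : ℕ} (W : EuclideanSpace ℝ (Fin p × Fin d)) (j : Fin p)
    (v : EuclideanSpace ℝ (Fin d)) : EuclideanSpace ℝ (Fin p × Fin d) :=
  WithLp.toLp 2 (fun q => if q.1 = j then v q.2 else W q)

/-- The depth-2 network `f(x; a, W) = ∑ⱼ aⱼ σ(⟨wⱼ, x⟩)`. -/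
def net {p d : ℕ} (σ : ℝ → ℝ) (a : EuclideanSpace ℝ (Fin p))
    (W : EuclideanSpace ℝ (Fin p × Fin d)) (x : EuclideanSpace ℝ (Fin d)) : ℝ :=
  ∑ j, a j * σ (inner ℝ (row W j) x : ℝ)

/-- The regularized logistic empirical risk. -/
def risk {p d n : ℕ} (σ : ℝ → ℝ) (a : EuclideanSpace ℝ (Fin p))
    (x : Fin n → EuclideanSpace ℝ (Fin d)) (y : Fin n → ℝ) (lam : ℝ)
    (W : EuclideanSpace ℝ (Fin p × Fin d)) : ℝ :=
  (1 / (n : ℝ)) * ∑ i, Real.log (1 + Real.exp (-(y i) * net σ a W (x i)))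
    + (lam / 2) * ‖W‖ ^ 2

/-- The second partial derivative of `g` in coordinate `q`. -/
def secondPartial {m : Type*} [Fintype m] [DecidableEq m]
    (g : EuclideanSpace ℝ m → ℝ) (W : EuclideanSpace ℝ m) (q : m) : ℝ :=
  fderiv ℝ (fun W' => fderiv ℝ g W' (EuclideanSpace.single q 1)) W
    (EuclideanSpace.single q 1)

/-- The Laplacian of `g`: sum of all second partial derivatives. -/
def lap {m : Type*} [Fintype m] [DecidableEq m]
    (g : EuclideanSpace ℝ m → ℝ) (W : EuclideanSpace ℝ m) : ℝ :=
  ∑ q, secondPartial g W q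

/-- The partial Laplacian of `g` in the coordinates of row `j`. -/
def rowLap {p d : ℕ} (g : EuclideanSpace ℝ (Fin p × Fin d) → ℝ)
    (W : EuclideanSpace ℝ (Fin p × Fin d)) (j : Fin p) : ℝ :=
  ∑ k, secondPartial g W (j, k)

/-- The gradient of `g` with respect to the row `wⱼ`, all other rows held fixed. -/
def gradRow {p d : ℕ} (g : EuclideanSpace ℝ (Fin p × Fin d) → ℝ)
    (W : EuclideanSpace ℝ (Fin p × Fin d)) (j : Fin p) : EuclideanSpace ℝ (Fin d) :=
  gradient (fun v => g (updRow W j v)) (row W j)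

/-- The Gibbs measure with density `(1/Z_s) exp(-2 g(W)/s)` w.r.t. Lebesgue measure. -/
def gibbs {m : Type*} [Fintype m] (g : EuclideanSpace ℝ m → ℝ) (s : ℝ) :
    Measure (EuclideanSpace ℝ m) :=
  volume.withDensity fun W =>
    ENNReal.ofReal ((∫ W', Real.exp (-2 * g W' / s))⁻¹ * Real.exp (-2 * g W / s))

end
lemma my_sigmoid_le (t : ℝ) : Real.exp t / (1 + Real.exp t) ≤ 1/2 + |t|/4 := by
  have hpos : (0:ℝ) < 1 + Real.exp t := by positivity
  rcases le_or_gt t 0 with ht | ht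
  · have h1 : Real.exp t ≤ 1 := Real.exp_le_one_iff.mpr ht
    have : Real.exp t / (1 + Real.exp t) ≤ 1/2 := by
      rw [div_le_iff₀ hpos]; nlinarith
    nlinarith [abs_nonneg t]
  · set g : ℝ → ℝ := fun s => s * (1 + Real.exp s) - 2 * (Real.exp s - 1) with hg
    have hd : ∀ s : ℝ, HasDerivAt g (1 + Real.exp s + s * Real.exp s - 2 * Real.exp s) s := by
      intro s
      have h1 : HasDerivAt (fun s : ℝ => s * (1 + Real.exp s))
          (1 * (1 + Real.exp s) + s * Real.exp s) s :=
        (hasDerivAt_id s).mul ((Real.hasDerivAt_exp s).const_add 1)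
      have h2 : HasDerivAt (fun s : ℝ => 2 * (Real.exp s - 1)) (2 * Real.exp s) s :=
        (((Real.hasDerivAt_exp s).sub_const 1).const_mul 2)
      exact (h1.sub h2).congr_deriv (by ring)
    have hmono : Monotone g := by
      apply monotone_of_deriv_nonneg (fun s => (hd s).differentiableAt)
      intro s
      rw [(hd s).deriv]
      have h1 : Real.exp s * Real.exp (-s) = 1 := by rw [← Real.exp_add]; simp
      nlinarith [Real.add_one_le_exp (-s), Real.exp_pos s]
    have h0 : g 0 = 0 := by simp [hg]
    have hgt : 0 ≤ g t := h0 ▸ hmono ht.le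
    rw [abs_of_pos ht, div_le_iff₀ hpos]
    simp only [hg] at hgt
    nlinarith

lemma my_normsq {ι : Type*} [Fintype ι] (u : EuclideanSpace ℝ ι) :
    ‖u‖ ^ 2 = ∑ i, (u i) ^ 2 := by
  rw [EuclideanSpace.norm_eq, Real.sq_sqrt (by positivity)]
  simp [sq_abs]


set_option maxHeartbeats 1000000 in
/-- Lower bound on the norm of the gradient of the regularized logistic risk with respect
to the row `wⱼ`. -/
theorem gradRow_lower_bound {p d n : ℕ} (hn : 0 < n) (σ : ℝ → ℝ)
    (M_D L c₀ Bx lam : ℝ)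
    (hσ : Differentiable ℝ σ) (hM : ∀ t : ℝ, |deriv σ t| ≤ M_D)
    (hLip : ∀ s t : ℝ, |σ s - σ t| ≤ L * |s - t|) (hL : 0 ≤ L) (hσ0 : σ 0 = c₀)
    (a : EuclideanSpace ℝ (Fin p))
    (x : Fin n → EuclideanSpace ℝ (Fin d)) (y : Fin n → ℝ)
    (hx : ∀ i, ‖x i‖ ≤ Bx) (hBx : 0 ≤ Bx) (hy : ∀ i, y i = 1 ∨ y i = -1)
    (hlam : 0 < lam) (j : Fin p) (W : EuclideanSpace ℝ (Fin p × Fin d)) :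
    ‖gradRow (risk σ a x y lam) W j‖ ^ 2 ≥
      lam ^ 2 * ‖row W j‖ ^ 2 -
        2 * lam * ‖row W j‖ * |a j| * M_D * Bx *
          (1 / 2 + ‖a‖ * (L * Bx * ‖W‖ + Real.sqrt p * |c₀|) / 4) := by
  classical
  set F : ℝ := L * Bx * ‖W‖ + Real.sqrt p * |c₀| with hFdef
  set v : EuclideanSpace ℝ (Fin d) := row W j with hvdef
  have hMD0 : 0 ≤ M_D := le_trans (abs_nonneg _) (hM 0)
  have hF0 : 0 ≤ F := by
    rw [hFdef]; positivity
  set c : Fin n → ℝ :=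
    fun i => ∑ k ∈ Finset.univ.erase j, a k * σ (inner ℝ (row W k) (x i) : ℝ) with hcdef
  set t0 : Fin n → ℝ := fun i => (inner ℝ v (x i) : ℝ) with ht0def
  set ψ : Fin n → ℝ := fun i =>
    Real.exp (-(y i) * (a j * σ (t0 i) + c i)) / (1 + Real.exp (-(y i) * (a j * σ (t0 i) + c i)))
      * (-(y i) * (a j * deriv σ (t0 i))) with hψdef
  set G : EuclideanSpace ℝ (Fin d) := (1/(n:ℝ)) • ∑ i, ψ i • x i with hGdef
  set Cr : ℝ := (lam/2) * ∑ k ∈ Finset.univ.erase j, ∑ l, (W (k, l))^2 with hCrdef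
  -- rows of updated matrix
  have hrowu : ∀ (v' : EuclideanSpace ℝ (Fin d)) (k : Fin p),
      row (updRow W j v') k = if k = j then v' else row W k := by
    intro v' k; by_cases h : k = j
    · subst h; ext l; simp [row, updRow]
    · ext l; simp [row, updRow, h]
  -- net decomposition
  have hnet : ∀ (v' : EuclideanSpace ℝ (Fin d)) (i : Fin n),
      net σ a (updRow W j v') (x i) = a j * σ (inner ℝ v' (x i) : ℝ) + c i := by
    intro v' i
    simp only [net, hcdef]
    rw [← Finset.add_sum_erase Finset.univ _ (Finset.mem_univ j)]
    congr 1
    · rw [hrowu v' j, if_pos rfl]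
    · refine Finset.sum_congr rfl fun k hk => ?_
      rw [hrowu v' k, if_neg (Finset.ne_of_mem_erase hk)]
  -- norm splitting
  have hnormsplit : ∀ v' : EuclideanSpace ℝ (Fin d),
      ‖updRow W j v'‖^2 = ‖v'‖^2 + ∑ k ∈ Finset.univ.erase j, ∑ l, (W (k,l))^2 := by
    intro v'
    rw [my_normsq, my_normsq, Fintype.sum_prod_type,
      ← Finset.add_sum_erase Finset.univ _ (Finset.mem_univ j)]
    congr 1
    · exact Finset.sum_congr rfl fun l _ => by simp [updRow]
    · exact Finset.sum_congr rfl fun k hk => Finset.sum_congr rfl fun l _ => by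
        simp [updRow, Finset.ne_of_mem_erase hk]
  -- risk rewrite
  have hrisk : ∀ v' : EuclideanSpace ℝ (Fin d), risk σ a x y lam (updRow W j v') =
      (1/(n:ℝ)) * ∑ i, Real.log (1 + Real.exp (-(y i) * (a j * σ (inner ℝ v' (x i) : ℝ) + c i)))
        + ((lam/2) * ‖v'‖^2 + Cr) := by
    intro v'
    simp only [risk, hnet, hCrdef]
    rw [hnormsplit v']
    ring
  -- scalar derivative
  have hφ : ∀ i : Fin n, HasDerivAt
      (fun t => Real.log (1 + Real.exp (-(y i) * (a j * σ t + c i)))) (ψ i) (t0 i) := by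
    intro i
    have hu : HasDerivAt (fun t => -(y i) * (a j * σ t + c i))
        (-(y i) * (a j * deriv σ (t0 i))) (t0 i) :=
      (((hσ (t0 i)).hasDerivAt.const_mul (a j)).add_const (c i)).const_mul (-(y i))
    have hexp := hu.exp
    have h1 := hexp.const_add 1
    have hpos : (1 : ℝ) + Real.exp (-(y i) * (a j * σ (t0 i) + c i)) ≠ 0 := by positivity
    have hlog := h1.log hpos
    convert hlog using 1
    simp only [hψdef]
    ring
  -- inner ℝ derivative
  have hinner : ∀ i : Fin n, HasFDerivAt
      (fun v' : EuclideanSpace ℝ (Fin d) => (inner ℝ v' (x i) : ℝ)) (innerSL ℝ (x i)) v := by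
    intro i
    have heq : (fun v' : EuclideanSpace ℝ (Fin d) => (inner ℝ v' (x i) : ℝ))
        = fun v' => (innerSL ℝ (x i)) v' := by
      funext v'
      rw [innerSL_apply_apply, real_inner_comm]
    rw [heq]; exact (innerSL ℝ (x i)).hasFDerivAt
  have hterm : ∀ i : Fin n, HasFDerivAt
      (fun v' : EuclideanSpace ℝ (Fin d) =>
        Real.log (1 + Real.exp (-(y i) * (a j * σ (inner ℝ v' (x i) : ℝ) + c i))))
      (ψ i • innerSL ℝ (x i)) v := by
    intro i
    exact (hφ i).comp_hasFDerivAt v (hinner i)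
  have hsum : HasFDerivAt
      (fun v' : EuclideanSpace ℝ (Fin d) =>
        ∑ i, Real.log (1 + Real.exp (-(y i) * (a j * σ (inner ℝ v' (x i) : ℝ) + c i))))
      (∑ i, ψ i • innerSL ℝ (x i)) v := HasFDerivAt.fun_sum (fun i _ => hterm i)
  have hpart1 := hsum.const_mul (1/(n:ℝ))
  have hpart2 : HasFDerivAt (fun v' : EuclideanSpace ℝ (Fin d) => (lam/2) * ‖v'‖^2 + Cr)
      (lam • innerSL ℝ v) v := by
    have h := (((hasStrictFDerivAt_norm_sq v).hasFDerivAt).const_mul (lam/2)).add_const Cr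
    refine h.congr_fderiv (ContinuousLinearMap.ext fun w => ?_)
    simp only [ContinuousLinearMap.smul_apply, two_smul, ContinuousLinearMap.add_apply,
      smul_eq_mul]
    ring
  have htot := hpart1.add hpart2
  have hgradEq : (InnerProductSpace.toDual ℝ (EuclideanSpace ℝ (Fin d))) (G + lam • v)
      = (1/(n:ℝ)) • ∑ i, ψ i • innerSL ℝ (x i) + lam • innerSL ℝ v := by
    refine ContinuousLinearMap.ext fun w => ?_
    have hL1 : (InnerProductSpace.toDual ℝ (EuclideanSpace ℝ (Fin d))) (G + lam • v) w
        = (1/(n:ℝ)) * (∑ i, ψ i * (inner ℝ (x i) w : ℝ)) + lam * (inner ℝ v w : ℝ) := by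
      rw [InnerProductSpace.toDual_apply_apply, inner_add_left, hGdef, real_inner_smul_left,
        real_inner_smul_left, sum_inner]
      congr 2
      exact Finset.sum_congr rfl fun i _ => real_inner_smul_left _ _ _
    have hL2 : ((1/(n:ℝ)) • ∑ i, ψ i • innerSL ℝ (x i) + lam • innerSL ℝ v) w
        = (1/(n:ℝ)) * (∑ i, ψ i * (inner ℝ (x i) w : ℝ)) + lam * (inner ℝ v w : ℝ) := by
      simp only [ContinuousLinearMap.add_apply, ContinuousLinearMap.smul_apply,
        ContinuousLinearMap.sum_apply, innerSL_apply_apply, smul_eq_mul]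
    rw [hL1, hL2]
  have key : HasGradientAt (fun v' => risk σ a x y lam (updRow W j v')) (G + lam • v) v := by
    have hfun : (fun v' => risk σ a x y lam (updRow W j v'))
        = fun v' : EuclideanSpace ℝ (Fin d) =>
          (1/(n:ℝ)) * ∑ i, Real.log (1 + Real.exp (-(y i) * (a j * σ (inner ℝ v' (x i) : ℝ) + c i)))
            + ((lam/2) * ‖v'‖^2 + Cr) := funext hrisk
    rw [hfun, hasGradientAt_iff_hasFDerivAt, hgradEq]
    exact htot
  have hgr : gradRow (risk σ a x y lam) W j = G + lam • v := by
    simp only [gradRow]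
    exact key.gradient
  -- bound on |σ| at inner ℝ products
  have hσb : ∀ k : Fin p, ∀ i : Fin n,
      |σ (inner ℝ (row W k) (x i) : ℝ)| ≤ L * Bx * ‖row W k‖ + |c₀| := by
    intro k i
    have h2 : |(inner ℝ (row W k) (x i) : ℝ)| ≤ ‖row W k‖ * Bx :=
      le_trans (abs_real_inner_le_norm _ _) (mul_le_mul_of_nonneg_left (hx i) (norm_nonneg _))
    have h1 : |σ (inner ℝ (row W k) (x i) : ℝ) - c₀| ≤ L * |(inner ℝ (row W k) (x i) : ℝ)| := by
      simpa [hσ0] using hLip (inner ℝ (row W k) (x i) : ℝ) 0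
    have h3 : |σ (inner ℝ (row W k) (x i) : ℝ)|
        ≤ |σ (inner ℝ (row W k) (x i) : ℝ) - c₀| + |c₀| := by
      calc |σ (inner ℝ (row W k) (x i) : ℝ)|
          = |(σ (inner ℝ (row W k) (x i) : ℝ) - c₀) + c₀| := by ring_nf
        _ ≤ _ := abs_add_le _ _
    nlinarith [mul_le_mul_of_nonneg_left h2 hL, abs_nonneg (inner ℝ (row W k) (x i) : ℝ)]
  -- Cauchy-Schwarz machinery
  set Av : EuclideanSpace ℝ (Fin p) := WithLp.toLp 2 (fun k => |a k|) with hAvdef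
  set Rv : EuclideanSpace ℝ (Fin p) := WithLp.toLp 2 (fun k => ‖row W k‖) with hRvdef
  set Ov : EuclideanSpace ℝ (Fin p) := WithLp.toLp 2 (fun _ => (1:ℝ)) with hOvdef
  set Bv : EuclideanSpace ℝ (Fin p) := WithLp.toLp 2 (fun k => L * Bx * ‖row W k‖ + |c₀|) with hBvdef
  have hAa : ‖Av‖ = ‖a‖ := by
    have h1 : ‖Av‖^2 = ‖a‖^2 := by
      rw [my_normsq, my_normsq]
      refine Finset.sum_congr rfl fun k _ => ?_
      simp only [hAvdef, sq_abs]
    rw [← Real.sqrt_sq (norm_nonneg Av), ← Real.sqrt_sq (norm_nonneg a), h1]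
  have hR : ‖Rv‖ = ‖W‖ := by
    have h1 : ‖Rv‖^2 = ‖W‖^2 := by
      rw [my_normsq, my_normsq, Fintype.sum_prod_type]
      refine Finset.sum_congr rfl fun k _ => ?_
      simp only [hRvdef]
      rw [my_normsq (row W k)]
      rfl
    rw [← Real.sqrt_sq (norm_nonneg Rv), ← Real.sqrt_sq (norm_nonneg W), h1]
  have hones : ‖Ov‖ = Real.sqrt p := by
    have h1 : ‖Ov‖^2 = (p:ℝ) := by
      rw [my_normsq]
      simp [hOvdef]
    rw [← Real.sqrt_sq (norm_nonneg Ov), h1]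
  have hBvle : ‖Bv‖ ≤ F := by
    have hdecomp : Bv = (L * Bx) • Rv + |c₀| • Ov := by
      ext k
      simp [hBvdef, hRvdef, hOvdef, PiLp.add_apply, PiLp.smul_apply]
    rw [hdecomp]
    refine le_trans (norm_add_le _ _) ?_
    rw [norm_smul, norm_smul, hR, hones, hFdef]
    simp only [Real.norm_eq_abs, abs_abs, abs_of_nonneg (mul_nonneg hL hBx)]
    linarith [mul_comm |c₀| (Real.sqrt (p:ℝ))]
  -- bound on the "logit"
  have hfi : ∀ i, |a j * σ (t0 i) + c i| ≤ ‖a‖ * F := by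
    intro i
    have hsum_eq : a j * σ (t0 i) + c i = ∑ k, a k * σ (inner ℝ (row W k) (x i) : ℝ) := by
      rw [← Finset.add_sum_erase Finset.univ
        (fun k => a k * σ (inner ℝ (row W k) (x i) : ℝ)) (Finset.mem_univ j)]
    rw [hsum_eq]
    have hCS : (inner ℝ Av Bv : ℝ) ≤ ‖Av‖ * ‖Bv‖ := real_inner_le_norm _ _
    calc |∑ k, a k * σ (inner ℝ (row W k) (x i) : ℝ)|
        ≤ ∑ k, |a k * σ (inner ℝ (row W k) (x i) : ℝ)| := Finset.abs_sum_le_sum_abs _ _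
      _ ≤ ∑ k, |a k| * (L * Bx * ‖row W k‖ + |c₀|) := by
          refine Finset.sum_le_sum fun k _ => ?_
          rw [abs_mul]
          exact mul_le_mul_of_nonneg_left (hσb k i) (abs_nonneg _)
      _ = (inner ℝ Av Bv : ℝ) := by
          rw [PiLp.inner_apply]
          refine Finset.sum_congr rfl fun k _ => ?_
          simp [hAvdef, hBvdef, RCLike.inner_apply, conj_trivial, mul_comm]
      _ ≤ ‖Av‖ * ‖Bv‖ := hCS
      _ ≤ ‖a‖ * F := by
          rw [hAa]
          exact mul_le_mul_of_nonneg_left hBvle (norm_nonneg a)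
  -- bound each |ψ i| * ‖x i‖
  have haF : (0:ℝ) ≤ ‖a‖ * F := mul_nonneg (norm_nonneg a) hF0
  have hψb : ∀ i, |ψ i| * ‖x i‖ ≤ |a j| * M_D * Bx * (1/2 + ‖a‖ * F / 4) := by
    intro i
    have hyabs : |y i| = 1 := by rcases hy i with h | h <;> simp [h]
    have hUa : |(-(y i) * (a j * σ (t0 i) + c i))| = |a j * σ (t0 i) + c i| := by
      rw [abs_mul, abs_neg, hyabs, one_mul]
    have hsig0 : 0 ≤ Real.exp (-(y i) * (a j * σ (t0 i) + c i))
        / (1 + Real.exp (-(y i) * (a j * σ (t0 i) + c i))) := by positivity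
    have hsig : Real.exp (-(y i) * (a j * σ (t0 i) + c i))
        / (1 + Real.exp (-(y i) * (a j * σ (t0 i) + c i))) ≤ 1/2 + ‖a‖ * F / 4 := by
      refine le_trans (my_sigmoid_le _) ?_
      rw [hUa]
      have h2 := hfi i
      gcongr
    have hd : |(-(y i) * (a j * deriv σ (t0 i)))| ≤ |a j| * M_D := by
      rw [abs_mul, abs_neg, hyabs, one_mul, abs_mul]
      exact mul_le_mul_of_nonneg_left (hM _) (abs_nonneg _)
    have h1 : |ψ i| ≤ (1/2 + ‖a‖ * F / 4) * (|a j| * M_D) := by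
      rw [hψdef]
      simp only []
      rw [abs_mul, abs_of_nonneg hsig0]
      exact mul_le_mul hsig hd (abs_nonneg _) (by linarith)
    calc |ψ i| * ‖x i‖ ≤ ((1/2 + ‖a‖ * F / 4) * (|a j| * M_D)) * Bx := by
          refine mul_le_mul h1 (hx i) (norm_nonneg _) ?_
          have : (0:ℝ) ≤ |a j| * M_D := mul_nonneg (abs_nonneg _) hMD0
          nlinarith
      _ = |a j| * M_D * Bx * (1/2 + ‖a‖ * F / 4) := by ring
  -- bound on ‖G‖
  have hGb : ‖G‖ ≤ |a j| * M_D * Bx * (1/2 + ‖a‖ * F / 4) := by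
    rw [hGdef, norm_smul]
    have h1 : ‖∑ i, ψ i • x i‖ ≤ ∑ i, |ψ i| * ‖x i‖ := by
      refine le_trans (norm_sum_le _ _) (Finset.sum_le_sum fun i _ => ?_)
      rw [norm_smul, Real.norm_eq_abs]
    have h2 : ∑ i, |ψ i| * ‖x i‖ ≤ n * (|a j| * M_D * Bx * (1/2 + ‖a‖ * F / 4)) := by
      refine le_trans (Finset.sum_le_sum fun i _ => hψb i) ?_
      rw [Finset.sum_const, Finset.card_univ, Fintype.card_fin, nsmul_eq_mul]
    have hn' : (0:ℝ) < n := Nat.cast_pos.mpr hn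
    have : ‖(1/(n:ℝ))‖ = 1/(n:ℝ) := by
      rw [Real.norm_eq_abs, abs_of_pos (by positivity)]
    rw [this]
    calc 1/(n:ℝ) * ‖∑ i, ψ i • x i‖ ≤ 1/(n:ℝ) * ((n:ℝ) * (|a j| * M_D * Bx * (1/2 + ‖a‖ * F / 4)))
        := by
          refine mul_le_mul_of_nonneg_left (le_trans h1 h2) (by positivity)
      _ = |a j| * M_D * Bx * (1/2 + ‖a‖ * F / 4) := by field_simp
  -- conclusion
  rw [hgr]
  have hexp2 := norm_add_sq_real G (lam • v)
  have hip : -(‖G‖ * ‖lam • v‖) ≤ (inner ℝ G (lam • v) : ℝ) :=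
    neg_le_of_abs_le (abs_real_inner_le_norm _ _)
  have hns : ‖lam • v‖ = lam * ‖v‖ := by
    rw [norm_smul, Real.norm_eq_abs, abs_of_pos hlam]
  rw [hns] at hexp2 hip
  have h4 : 0 ≤ (|a j| * M_D * Bx * (1/2 + ‖a‖ * F / 4) - ‖G‖) * (lam * ‖v‖) :=
    mul_nonneg (sub_nonneg.mpr hGb) (mul_nonneg hlam.le (norm_nonneg v))
  nlinarith [sq_nonneg ‖G‖, norm_nonneg G, norm_nonneg v, hlam.le]
end

section
/- Under the stated assumptions on σ and the data, for every W ∈ ℝ^{p×d} the full gradient of the regularized logistic risk satisfies the lower bound: ‖∇ L̃(W)‖² ≥ ( λ² − λ‖a‖₂²·M_D·B_x²·L/2 )·‖W‖_F² − λ·‖W‖_F·‖a‖₂·M_D·B_x·( 1 + ‖a‖₂·‖c‖₂/2 ). -/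
open MeasureTheory Real Filter

section Auxiliary

noncomputable section
/-- Embedding of a vector `v` into row `j` of a `p × d` matrix. -/
def emb {p d : ℕ} (j : Fin p) (v : EuclideanSpace ℝ (Fin d)) :
    EuclideanSpace ℝ (Fin p × Fin d) :=
  WithLp.toLp 2 (fun q : Fin p × Fin d => if q.1 = j then v q.2 else 0)
end

lemma le_of_sq_le_sq'' {X Y : ℝ} (hX : 0 ≤ X) (hY : 0 ≤ Y) (h : X ^ 2 ≤ Y ^ 2) : X ≤ Y := by
  nlinarith [sq_nonneg (X - Y), sq_nonneg (X + Y)]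

lemma aux_psi_nonneg : ∀ t : ℝ, 0 ≤ t → 0 ≤ 1 + (t - 1) * Real.exp t := by
  have hψ : ∀ t : ℝ, HasDerivAt (fun s => 1 + (s - 1) * Real.exp s) (t * Real.exp t) t := by
    intro t
    have h := (((hasDerivAt_id t).sub_const 1).mul (Real.hasDerivAt_exp t)).const_add 1
    refine h.congr_deriv ?_
    simp only [id_eq]
    ring
  have mono : MonotoneOn (fun s => 1 + (s - 1) * Real.exp s) (Set.Ici 0) := by
    apply monotoneOn_of_deriv_nonneg (convex_Ici 0)
    · exact (Continuous.continuousOn (by continuity))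
    · intro s _
      exact ((hψ s).differentiableAt).differentiableWithinAt
    · intro s hs
      rw [(hψ s).deriv]
      rw [interior_Ici] at hs
      exact mul_nonneg (le_of_lt hs) (Real.exp_pos s).le
  intro t ht
  have := mono (by simp : (0:ℝ) ∈ Set.Ici 0) (by simpa : t ∈ Set.Ici 0) ht
  simpa using this

lemma aux_phi_nonneg : ∀ t : ℝ, 0 ≤ t → (2 - t) * Real.exp t ≤ 2 + t := by
  have hφ : ∀ t : ℝ, HasDerivAt (fun s => 2 + s - (2 - s) * Real.exp s)
      (1 + (t - 1) * Real.exp t) t := by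
    intro t
    have h2 : HasDerivAt (fun s : ℝ => (2 - s) * Real.exp s) ((1 - t) * Real.exp t) t := by
      have h := ((hasDerivAt_id t).const_sub 2).mul (Real.hasDerivAt_exp t)
      refine h.congr_deriv ?_
      simp only [id_eq]
      ring
    have h1 : HasDerivAt (fun s : ℝ => 2 + s) (1 : ℝ) t := by
      simpa using (hasDerivAt_id t).const_add 2
    have h := h1.sub h2
    refine h.congr_deriv ?_
    ring
  have mono : MonotoneOn (fun s => 2 + s - (2 - s) * Real.exp s) (Set.Ici 0) := by
    apply monotoneOn_of_deriv_nonneg (convex_Ici 0)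
    · exact (Continuous.continuousOn (by continuity))
    · intro s _
      exact ((hφ s).differentiableAt).differentiableWithinAt
    · intro s hs
      rw [(hφ s).deriv]
      rw [interior_Ici] at hs
      exact aux_psi_nonneg s (le_of_lt hs)
  intro t ht
  have := mono (by simp : (0:ℝ) ∈ Set.Ici 0) (by simpa : t ∈ Set.Ici 0) ht
  simp only [Real.exp_zero] at this
  nlinarith [this]

lemma sig_bound (t : ℝ) : Real.exp t / (1 + Real.exp t) ≤ 1 / 2 + |t| / 4 := by
  have hpos : (0:ℝ) < 1 + Real.exp t := by positivity
  rcases le_total t 0 with ht | ht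
  · rw [abs_of_nonpos ht, div_le_iff₀ hpos]
    have h1 : Real.exp t ≤ 1 := Real.exp_le_one_iff.mpr ht
    nlinarith [Real.exp_pos t, mul_nonneg (neg_nonneg.mpr ht) (Real.exp_pos t).le]
  · rw [abs_of_nonneg ht, div_le_iff₀ hpos]
    nlinarith [aux_phi_nonneg t ht]

lemma euc_norm_sq {m : Type*} [Fintype m] (v : EuclideanSpace ℝ m) :
    ‖v‖ ^ 2 = ∑ q, v q ^ 2 := by
  rw [EuclideanSpace.norm_eq, Real.sq_sqrt (by positivity)]
  simp [sq_abs]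

lemma euc_inner {m : Type*} [Fintype m] (u v : EuclideanSpace ℝ m) :
    (inner ℝ u v : ℝ) = ∑ q, u q * v q := by
  simp [PiLp.inner_apply, RCLike.inner_apply, conj_trivial, mul_comm]

lemma inner_emb {p d : ℕ} (j : Fin p) (v : EuclideanSpace ℝ (Fin d))
    (V : EuclideanSpace ℝ (Fin p × Fin d)) :
    (inner ℝ (emb j v) V : ℝ) = (inner ℝ v (row V j) : ℝ) := by
  rw [euc_inner, euc_inner, Fintype.sum_prod_type]
  rw [Finset.sum_eq_single j]
  · simp [emb, row]
  · intro b _ hb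
    simp [emb, hb]
  · simp

lemma rows_norm_sq {p d : ℕ} (W : EuclideanSpace ℝ (Fin p × Fin d)) :
    ∑ j, ‖row W j‖ ^ 2 = ‖W‖ ^ 2 := by
  rw [euc_norm_sq W, Fintype.sum_prod_type]
  congr 1
  funext j
  rw [euc_norm_sq]
  rfl

lemma norm_combo {p d : ℕ} (b : Fin p → ℝ) (v : EuclideanSpace ℝ (Fin d)) :
    ‖∑ j, b j • emb j v‖ ^ 2 = (∑ j, b j ^ 2) * ‖v‖ ^ 2 := by
  rw [euc_norm_sq, euc_norm_sq, Fintype.sum_prod_type]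
  rw [Finset.sum_mul]
  congr 1
  funext j
  have happ : ∀ (k : Fin d), (∑ j', b j' • emb j' v) (j, k) = b j * v k := by
    intro k
    have : (∑ j', b j' • emb j' v) (j, k) = ∑ j', b j' * (emb j' v (j, k)) := by
      rw [show (∑ j', b j' • emb j' v) (j, k) = ∑ j', (b j' • emb j' v) (j, k) from
        by rw [WithLp.ofLp_sum, Finset.sum_apply]]
      rfl
    rw [this, Finset.sum_eq_single j]
    · simp [emb]
    · intro b' _ hb'; simp [emb, Ne.symm hb']
    · simp
  rw [Finset.mul_sum]
  congr 1
  funext k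
  rw [happ k]
  ring

open InnerProductSpace in
/-- Explicit formula for the gradient of the regularized logistic risk. -/
lemma gradient_risk_eq {p d n : ℕ} (σ : ℝ → ℝ) (hσ : Differentiable ℝ σ)
    (a : EuclideanSpace ℝ (Fin p)) (x : Fin n → EuclideanSpace ℝ (Fin d))
    (y : Fin n → ℝ) (lam : ℝ) (W : EuclideanSpace ℝ (Fin p × Fin d)) :
    gradient (risk σ a x y lam) W = lam • W +
      (1 / (n : ℝ)) • ∑ i, ((Real.exp (-(y i) * net σ a W (x i)) * -(y i)) /
          (1 + Real.exp (-(y i) * net σ a W (x i)))) •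
        (∑ j, (a j * deriv σ (inner ℝ (row W j) (x i) : ℝ)) • emb j (x i)) := by
  have hnet : ∀ i, HasFDerivAt (fun W' => net σ a W' (x i))
      (∑ j, (a j * deriv σ (inner ℝ (row W j) (x i) : ℝ)) • innerSL ℝ (emb j (x i))) W := by
    intro i
    apply HasFDerivAt.fun_sum
    intro j _
    have hlin : HasFDerivAt (fun W' : EuclideanSpace ℝ (Fin p × Fin d) =>
        (inner ℝ (row W' j) (x i) : ℝ)) (innerSL ℝ (emb j (x i))) W := by
      have h := (innerSL ℝ (emb j (x i))).hasFDerivAt (x := W)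
      have he : (fun W' : EuclideanSpace ℝ (Fin p × Fin d) => (inner ℝ (row W' j) (x i) : ℝ))
          = fun W' => innerSL ℝ (emb j (x i)) W' := by
        funext W'
        rw [innerSL_apply_apply, inner_emb, real_inner_comm]
      rw [he]
      exact h
    have hσj : HasDerivAt σ (deriv σ (inner ℝ (row W j) (x i) : ℝ))
        (inner ℝ (row W j) (x i) : ℝ) := (hσ _).hasDerivAt
    have := (hσj.comp_hasFDerivAt W hlin).const_mul (a j)
    simpa [smul_smul] using this
  have hD : HasFDerivAt (risk σ a x y lam)
      ((1 / (n : ℝ)) • ∑ i, ((Real.exp (-(y i) * net σ a W (x i)) * -(y i)) /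
          (1 + Real.exp (-(y i) * net σ a W (x i)))) •
          (∑ j, (a j * deriv σ (inner ℝ (row W j) (x i) : ℝ)) • innerSL ℝ (emb j (x i)))
        + (lam / 2) • ((fderivInnerCLM ℝ (W, W)).comp
            ((ContinuousLinearMap.id ℝ _).prod (ContinuousLinearMap.id ℝ _)))) W := by
    have hpart1 : HasFDerivAt
        (fun W' => (1 / (n : ℝ)) * ∑ i, Real.log (1 + Real.exp (-(y i) * net σ a W' (x i))))
        ((1 / (n : ℝ)) • ∑ i, ((Real.exp (-(y i) * net σ a W (x i)) * -(y i)) /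
            (1 + Real.exp (-(y i) * net σ a W (x i)))) •
            (∑ j, (a j * deriv σ (inner ℝ (row W j) (x i) : ℝ)) • innerSL ℝ (emb j (x i)))) W := by
      apply HasFDerivAt.const_mul
      apply HasFDerivAt.fun_sum
      intro i _
      have hℓ : HasDerivAt (fun t => Real.log (1 + Real.exp (-(y i) * t)))
          ((Real.exp (-(y i) * net σ a W (x i)) * -(y i)) /
            (1 + Real.exp (-(y i) * net σ a W (x i)))) (net σ a W (x i)) := by
        have h1 : HasDerivAt (fun t : ℝ => -(y i) * t) (-(y i)) (net σ a W (x i)) := by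
          simpa using (hasDerivAt_id (net σ a W (x i))).const_mul (-(y i))
        have h2 := h1.exp
        have h3 := h2.const_add 1
        have h4 := h3.log (by positivity)
        simpa [mul_comm] using h4
      exact hℓ.comp_hasFDerivAt W (hnet i)
    have hpart2 : HasFDerivAt (fun W' : EuclideanSpace ℝ (Fin p × Fin d) => (lam / 2) * ‖W'‖ ^ 2)
        ((lam / 2) • ((fderivInnerCLM ℝ (W, W)).comp
          ((ContinuousLinearMap.id ℝ _).prod (ContinuousLinearMap.id ℝ _)))) W := by
      have he : (fun W' : EuclideanSpace ℝ (Fin p × Fin d) => (lam / 2) * ‖W'‖ ^ 2)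
          = fun W' => (lam / 2) * (inner ℝ W' W' : ℝ) := by
        funext W'
        rw [real_inner_self_eq_norm_sq]
      rw [he]
      exact ((hasFDerivAt_id W).inner ℝ (hasFDerivAt_id W)).const_mul (lam / 2)
    exact hpart1.add hpart2
  have hDeq : ((1 / (n : ℝ)) • ∑ i, ((Real.exp (-(y i) * net σ a W (x i)) * -(y i)) /
          (1 + Real.exp (-(y i) * net σ a W (x i)))) •
          (∑ j, (a j * deriv σ (inner ℝ (row W j) (x i) : ℝ)) • innerSL ℝ (emb j (x i)))
        + (lam / 2) • ((fderivInnerCLM ℝ (W, W)).comp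
            ((ContinuousLinearMap.id ℝ _).prod (ContinuousLinearMap.id ℝ _))))
      = toDual ℝ (EuclideanSpace ℝ (Fin p × Fin d))
          (lam • W + (1 / (n : ℝ)) • ∑ i, ((Real.exp (-(y i) * net σ a W (x i)) * -(y i)) /
              (1 + Real.exp (-(y i) * net σ a W (x i)))) •
            (∑ j, (a j * deriv σ (inner ℝ (row W j) (x i) : ℝ)) • emb j (x i))) := by
    ext V
    simp only [ContinuousLinearMap.add_apply, ContinuousLinearMap.smul_apply,
      ContinuousLinearMap.coe_sum', Finset.sum_apply, ContinuousLinearMap.comp_apply,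
      ContinuousLinearMap.prod_apply, ContinuousLinearMap.id_apply, fderivInnerCLM_apply,
      innerSL_apply_apply, toDual_apply_apply, smul_eq_mul, inner_add_left, real_inner_smul_left,
      sum_inner]
    rw [real_inner_comm V W]
    ring
  have hG := hasFDerivAt_iff_hasGradientAt.mp hD
  rw [hG.gradient, hDeq, LinearIsometryEquiv.symm_apply_apply]

end Auxiliary

set_option maxHeartbeats 1000000

/-- Lower bound on the norm of the full gradient of the regularized logistic risk:
`‖∇L̃(W)‖² ≥ (λ² − λ‖a‖² M_D B_x² L/2)‖W‖_F² − λ‖W‖_F ‖a‖ M_D B_x (1 + ‖a‖‖c‖/2)`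
where `‖c‖ = √p |c₀|`. -/
theorem gradient_lower_bound {p d n : ℕ} (hn : 0 < n) (σ : ℝ → ℝ)
    (M_D L c₀ Bx lam : ℝ)
    (hσ : Differentiable ℝ σ) (hM : ∀ t : ℝ, |deriv σ t| ≤ M_D)
    (hLip : ∀ s t : ℝ, |σ s - σ t| ≤ L * |s - t|) (hL : 0 ≤ L) (hσ0 : σ 0 = c₀)
    (a : EuclideanSpace ℝ (Fin p))
    (x : Fin n → EuclideanSpace ℝ (Fin d)) (y : Fin n → ℝ)
    (hx : ∀ i, ‖x i‖ ≤ Bx) (hBx : 0 ≤ Bx) (hy : ∀ i, y i = 1 ∨ y i = -1)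
    (hlam : 0 < lam) (W : EuclideanSpace ℝ (Fin p × Fin d)) :
    ‖gradient (risk σ a x y lam) W‖ ^ 2 ≥
      (lam ^ 2 - lam * ‖a‖ ^ 2 * M_D * Bx ^ 2 * L / 2) * ‖W‖ ^ 2 -
        lam * ‖W‖ * ‖a‖ * M_D * Bx * (1 + ‖a‖ * (Real.sqrt p * |c₀|) / 2) := by
  have hMD : 0 ≤ M_D := le_trans (abs_nonneg _) (hM 0)
  have hanorm : (0:ℝ) ≤ ‖a‖ := norm_nonneg a
  have hWnorm : (0:ℝ) ≤ ‖W‖ := norm_nonneg W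
  have hsqp : (0:ℝ) ≤ Real.sqrt p := Real.sqrt_nonneg _
  -- the data-dependent part of the gradient
  set gd : EuclideanSpace ℝ (Fin p × Fin d) :=
    (1 / (n : ℝ)) • ∑ i, ((Real.exp (-(y i) * net σ a W (x i)) * -(y i)) /
        (1 + Real.exp (-(y i) * net σ a W (x i)))) •
      (∑ j, (a j * deriv σ (inner ℝ (row W j) (x i) : ℝ)) • emb j (x i)) with hgd_def
  have hgrad : gradient (risk σ a x y lam) W = lam • W + gd :=
    gradient_risk_eq σ hσ a x y lam W
  -- bound on |net|
  have hnetb : ∀ i, |net σ a W (x i)| ≤ ‖a‖ * (L * Bx * ‖W‖ + Real.sqrt p * |c₀|) := by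
    intro i
    have h1 : |net σ a W (x i)| ≤ ∑ j, |a j| * (L * Bx * ‖row W j‖ + |c₀|) := by
      refine le_trans (Finset.abs_sum_le_sum_abs _ _) (Finset.sum_le_sum ?_)
      intro j _
      rw [abs_mul]
      refine mul_le_mul_of_nonneg_left ?_ (abs_nonneg _)
      have hs : |σ (inner ℝ (row W j) (x i) : ℝ)| ≤ L * |(inner ℝ (row W j) (x i) : ℝ)| + |c₀| := by
        have := hLip (inner ℝ (row W j) (x i) : ℝ) 0
        rw [hσ0, sub_zero] at this
        calc |σ (inner ℝ (row W j) (x i) : ℝ)|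
            ≤ |σ (inner ℝ (row W j) (x i) : ℝ) - c₀| + |c₀| := by
              have := abs_sub_abs_le_abs_sub (σ (inner ℝ (row W j) (x i) : ℝ)) c₀
              have h2 := abs_add_le (σ (inner ℝ (row W j) (x i) : ℝ) - c₀) c₀
              simpa using h2
          _ ≤ L * |(inner ℝ (row W j) (x i) : ℝ)| + |c₀| := by linarith
      have hip : |(inner ℝ (row W j) (x i) : ℝ)| ≤ ‖row W j‖ * Bx := by
        refine le_trans (abs_real_inner_le_norm _ _) ?_
        exact mul_le_mul_of_nonneg_left (hx i) (norm_nonneg _)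
      calc |σ (inner ℝ (row W j) (x i) : ℝ)|
          ≤ L * (‖row W j‖ * Bx) + |c₀| := by
            have := mul_le_mul_of_nonneg_left hip hL
            linarith
        _ = L * Bx * ‖row W j‖ + |c₀| := by ring
    have h2 : ∑ j, |a j| * (L * Bx * ‖row W j‖ + |c₀|)
        = L * Bx * (∑ j, |a j| * ‖row W j‖) + |c₀| * ∑ j, |a j| := by
      rw [Finset.mul_sum, Finset.mul_sum, ← Finset.sum_add_distrib]
      congr 1; funext j; ring
    have hCS1 : ∑ j, |a j| * ‖row W j‖ ≤ ‖a‖ * ‖W‖ := by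
      refine le_of_sq_le_sq'' (Finset.sum_nonneg fun j _ =>
        mul_nonneg (abs_nonneg _) (norm_nonneg _)) (mul_nonneg hanorm hWnorm) ?_
      calc (∑ j, |a j| * ‖row W j‖) ^ 2
          ≤ (∑ j, |a j| ^ 2) * ∑ j, ‖row W j‖ ^ 2 :=
            Finset.sum_mul_sq_le_sq_mul_sq _ _ _
        _ = ‖a‖ ^ 2 * ‖W‖ ^ 2 := by
            rw [rows_norm_sq, euc_norm_sq a]
            simp [sq_abs]
        _ = (‖a‖ * ‖W‖) ^ 2 := by ring
    have hCS2 : ∑ j, |a j| ≤ Real.sqrt p * ‖a‖ := by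
      refine le_of_sq_le_sq'' (Finset.sum_nonneg fun j _ => abs_nonneg _)
        (mul_nonneg hsqp hanorm) ?_
      have h := Finset.sum_mul_sq_le_sq_mul_sq Finset.univ (fun j : Fin p => |a j|) (fun _ => 1)
      simp only [mul_one, one_pow, Finset.sum_const, Finset.card_univ, Fintype.card_fin,
        nsmul_eq_mul] at h
      calc (∑ j, |a j|) ^ 2 ≤ (∑ j, |a j| ^ 2) * p := h
        _ = ‖a‖ ^ 2 * p := by rw [euc_norm_sq a]; simp [sq_abs]
        _ = (Real.sqrt p * ‖a‖) ^ 2 := by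
            rw [mul_pow, Real.sq_sqrt (Nat.cast_nonneg p)]
            ring
    calc |net σ a W (x i)|
        ≤ L * Bx * (∑ j, |a j| * ‖row W j‖) + |c₀| * ∑ j, |a j| := by rw [← h2]; exact h1
      _ ≤ L * Bx * (‖a‖ * ‖W‖) + |c₀| * (Real.sqrt p * ‖a‖) := by
          have hA := mul_le_mul_of_nonneg_left hCS1 (mul_nonneg hL hBx)
          have hB := mul_le_mul_of_nonneg_left hCS2 (abs_nonneg c₀)
          linarith
      _ = ‖a‖ * (L * Bx * ‖W‖ + Real.sqrt p * |c₀|) := by ring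
  -- the scalar coefficient bound
  set S : ℝ := 1 / 2 + ‖a‖ * (L * Bx * ‖W‖ + Real.sqrt p * |c₀|) / 4 with hS_def
  have hS0 : 0 ≤ S := by
    have : 0 ≤ ‖a‖ * (L * Bx * ‖W‖ + Real.sqrt p * |c₀|) := by positivity
    rw [hS_def]; linarith
  have hcb : ∀ i, |(Real.exp (-(y i) * net σ a W (x i)) * -(y i)) /
      (1 + Real.exp (-(y i) * net σ a W (x i)))| ≤ S := by
    intro i
    have hyi : |y i| = 1 := by rcases hy i with h | h <;> simp [h]
    have hpos : (0:ℝ) < 1 + Real.exp (-(y i) * net σ a W (x i)) := by positivity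
    rw [abs_div, abs_of_pos hpos, abs_mul, abs_neg, hyi, mul_one,
      Real.abs_exp]
    have h1 := sig_bound (-(y i) * net σ a W (x i))
    have h2 : |-(y i) * net σ a W (x i)| = |net σ a W (x i)| := by
      rw [abs_mul, abs_neg, hyi, one_mul]
    rw [h2] at h1
    have h3 := hnetb i
    rw [hS_def]
    linarith
  -- bound on the per-sample vector
  have hub : ∀ i, ‖∑ j, (a j * deriv σ (inner ℝ (row W j) (x i) : ℝ)) • emb j (x i)‖
      ≤ M_D * ‖a‖ * Bx := by
    intro i
    refine le_of_sq_le_sq'' (norm_nonneg _) (by positivity) ?_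
    rw [norm_combo]
    have h1 : ∑ j, (a j * deriv σ (inner ℝ (row W j) (x i) : ℝ)) ^ 2 ≤ M_D ^ 2 * ‖a‖ ^ 2 := by
      calc ∑ j, (a j * deriv σ (inner ℝ (row W j) (x i) : ℝ)) ^ 2
          ≤ ∑ j, a j ^ 2 * M_D ^ 2 := by
            refine Finset.sum_le_sum fun j _ => ?_
            rw [mul_pow]
            refine mul_le_mul_of_nonneg_left ?_ (sq_nonneg _)
            have := hM (inner ℝ (row W j) (x i) : ℝ)
            nlinarith [abs_nonneg (deriv σ (inner ℝ (row W j) (x i) : ℝ)),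
              sq_abs (deriv σ (inner ℝ (row W j) (x i) : ℝ))]
        _ = M_D ^ 2 * ‖a‖ ^ 2 := by
            rw [euc_norm_sq a, ← Finset.sum_mul]
            simp [sq_abs]
            ring
    have h2 : ‖x i‖ ^ 2 ≤ Bx ^ 2 := by
      have := hx i
      nlinarith [norm_nonneg (x i)]
    calc (∑ j, (a j * deriv σ (inner ℝ (row W j) (x i) : ℝ)) ^ 2) * ‖x i‖ ^ 2
        ≤ (M_D ^ 2 * ‖a‖ ^ 2) * Bx ^ 2 := by
          refine mul_le_mul h1 h2 (sq_nonneg _) (by positivity)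
      _ = (M_D * ‖a‖ * Bx) ^ 2 := by ring
  -- bound on ‖gd‖
  have hgdb : ‖gd‖ ≤ S * (M_D * ‖a‖ * Bx) := by
    have hn' : (0:ℝ) < (n:ℝ) := by exact_mod_cast hn
    have hterm : ∀ i : Fin n, ‖((Real.exp (-(y i) * net σ a W (x i)) * -(y i)) /
        (1 + Real.exp (-(y i) * net σ a W (x i)))) •
        (∑ j, (a j * deriv σ (inner ℝ (row W j) (x i) : ℝ)) • emb j (x i))‖
        ≤ S * (M_D * ‖a‖ * Bx) := by
      intro i
      rw [norm_smul, Real.norm_eq_abs]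
      exact mul_le_mul (hcb i) (hub i) (norm_nonneg _) hS0
    have hsum : ‖∑ i, ((Real.exp (-(y i) * net σ a W (x i)) * -(y i)) /
        (1 + Real.exp (-(y i) * net σ a W (x i)))) •
        (∑ j, (a j * deriv σ (inner ℝ (row W j) (x i) : ℝ)) • emb j (x i))‖
        ≤ (n:ℝ) * (S * (M_D * ‖a‖ * Bx)) := by
      refine le_trans (norm_sum_le _ _) ?_
      refine le_trans (Finset.sum_le_sum fun i _ => hterm i) ?_
      rw [Finset.sum_const, Finset.card_univ, Fintype.card_fin, nsmul_eq_mul]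
    rw [hgd_def, norm_smul, Real.norm_eq_abs,
      abs_of_pos (show (0:ℝ) < 1 / (n:ℝ) by positivity)]
    have hmul := mul_le_mul_of_nonneg_left hsum
      (show (0:ℝ) ≤ 1 / (n:ℝ) by positivity)
    have heq : (1 / (n:ℝ)) * ((n:ℝ) * (S * (M_D * ‖a‖ * Bx))) = S * (M_D * ‖a‖ * Bx) := by
      field_simp
    linarith
  -- final computation
  rw [hgrad]
  have hexp : ‖lam • W + gd‖ ^ 2
      = ‖lam • W‖ ^ 2 + 2 * (inner ℝ (lam • W) gd : ℝ) + ‖gd‖ ^ 2 := norm_add_sq_real _ _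
  have hinner : (inner ℝ (lam • W) gd : ℝ) ≥ -(lam * ‖W‖ * ‖gd‖) := by
    have h1 : |(inner ℝ (lam • W) gd : ℝ)| ≤ ‖lam • W‖ * ‖gd‖ := abs_real_inner_le_norm _ _
    have h2 : ‖lam • W‖ = lam * ‖W‖ := by
      rw [norm_smul, Real.norm_eq_abs, abs_of_pos hlam]
    rw [h2] at h1
    have := neg_abs_le (inner ℝ (lam • W) gd : ℝ)
    linarith [abs_le.mp h1]
  have hns : ‖lam • W‖ = lam * ‖W‖ := by
    rw [norm_smul, Real.norm_eq_abs, abs_of_pos hlam]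
  have hgd0 : (0:ℝ) ≤ ‖gd‖ := norm_nonneg _
  have hkey : lam * ‖W‖ * ‖gd‖ ≤ lam * ‖W‖ * (S * (M_D * ‖a‖ * Bx)) :=
    mul_le_mul_of_nonneg_left hgdb (by positivity)
  rw [hexp, hns]
  rw [hS_def] at hkey
  nlinarith [sq_nonneg ‖gd‖, hkey, hinner]
end

section
/- Under the stated assumptions on σ and the data, if λ > M_D·L·B_x²·‖a‖₂²/2, then for every s > 0 the quantity (1/s)·‖∇L̃(W)‖² − ΔL̃(W) tends to +∞ as ‖W‖_F → ∞; i.e., the Villani drift condition holds for the regularized logistic empirical risk L̃, with the regularization threshold independent of the width p, the data, and s. -/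
open MeasureTheory Real Filter

noncomputable section

variable {p d n : ℕ}

abbrev ESp (p d : ℕ) := EuclideanSpace ℝ (Fin p × Fin d)

def myVec (x : Fin n → EuclideanSpace ℝ (Fin d)) (i : Fin n) (j : Fin p) : ESp p d :=
  WithLp.toLp 2 (fun q => if q.1 = j then x i q.2 else 0)

def myTheta (x : Fin n → EuclideanSpace ℝ (Fin d)) (i : Fin n) (j : Fin p) (W : ESp p d) : ℝ :=
  inner ℝ (myVec x i j) W

def myC (σ : ℝ → ℝ) (a : EuclideanSpace ℝ (Fin p)) (x : Fin n → EuclideanSpace ℝ (Fin d))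
    (y : Fin n → ℝ) (i : Fin n) (W : ESp p d) : ℝ :=
  -(y i) * ∑ j, a j * σ (myTheta x i j W)

variable (σ : ℝ → ℝ) (a : EuclideanSpace ℝ (Fin p)) (x : Fin n → EuclideanSpace ℝ (Fin d))
  (y : Fin n → ℝ)

def DcMap (i : Fin n) (W : ESp p d) : ESp p d →L[ℝ] ℝ :=
  ∑ j, (-(y i) * (a j * deriv σ (myTheta x i j W))) • (innerSL ℝ (myVec x i j))

lemma theta_hasFDerivAt (i : Fin n) (j : Fin p) (W : ESp p d) :
    HasFDerivAt (myTheta x i j) (innerSL ℝ (myVec x i j)) W :=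
  (innerSL ℝ (myVec x i j)).hasFDerivAt

lemma sigma_theta_hasFDerivAt (hσ : Differentiable ℝ σ) (i : Fin n) (j : Fin p) (W : ESp p d) :
    HasFDerivAt (fun W' => σ (myTheta x i j W'))
      (deriv σ (myTheta x i j W) • innerSL ℝ (myVec x i j)) W :=
  ((hσ (myTheta x i j W)).hasDerivAt).comp_hasFDerivAt W (theta_hasFDerivAt x i j W)

lemma c_hasFDerivAt (hσ : Differentiable ℝ σ) (i : Fin n) (W : ESp p d) :
    HasFDerivAt (myC σ a x y i) (DcMap σ a x y i W) W := by
  have h : HasFDerivAt (fun W' => ∑ j, a j * σ (myTheta x i j W'))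
      (∑ j, a j • (deriv σ (myTheta x i j W) • innerSL ℝ (myVec x i j))) W :=
    HasFDerivAt.fun_sum fun j _ => (sigma_theta_hasFDerivAt σ x hσ i j W).const_mul (a j)
  have h2 := h.const_mul (-(y i))
  refine h2.congr_fderiv ?_
  symm
  unfold DcMap
  rw [Finset.smul_sum]
  congr 1; ext j u
  simp [smul_smul, mul_assoc]

end
noncomputable section
variable {p d n : ℕ} (σ : ℝ → ℝ) (a : EuclideanSpace ℝ (Fin p))
  (x : Fin n → EuclideanSpace ℝ (Fin d)) (y : Fin n → ℝ) (lam : ℝ)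

def myPhi (t : ℝ) : ℝ := Real.log (1 + Real.exp t)
def myPhi' (t : ℝ) : ℝ := Real.exp t / (1 + Real.exp t)
lemma one_add_exp_pos (t : ℝ) : 0 < 1 + Real.exp t := by positivity

lemma myPhi_hasDerivAt (t : ℝ) : HasDerivAt myPhi (myPhi' t) t := by
  have h : HasDerivAt (fun u : ℝ => 1 + Real.exp u) (Real.exp t) t :=
    (Real.hasDerivAt_exp t).const_add 1
  show HasDerivAt (fun u => Real.log (1 + Real.exp u)) (myPhi' t) t
  simpa [myPhi, myPhi'] using h.log (ne_of_gt (one_add_exp_pos t))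

lemma inner_row_eq' (W : ESp p d) (i : Fin n) (j : Fin p) :
    (inner ℝ (row W j) (x i) : ℝ) = myTheta x i j W := by
  simp only [PiLp.inner_apply, RCLike.inner_apply, conj_trivial, myTheta, myVec, row,
    Fintype.sum_prod_type, ite_mul, zero_mul]
  rw [Finset.sum_comm]
  simp [mul_comm]

lemma risk_eq (W : ESp p d) :
    risk σ a x y lam W = (1 / (n : ℝ)) * ∑ i, myPhi (myC σ a x y i W)
      + (lam / 2) * ‖W‖ ^ 2 := by
  unfold risk net myPhi myC
  simp_rw [inner_row_eq']

def riskD (W : ESp p d) : ESp p d →L[ℝ] ℝ :=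
  (1 / (n : ℝ)) • (∑ i, myPhi' (myC σ a x y i W) • DcMap σ a x y i W) + lam • innerSL ℝ W

lemma risk_hasFDerivAt (hσ : Differentiable ℝ σ) (W : ESp p d) :
    HasFDerivAt (risk σ a x y lam) (riskD σ a x y lam W) W := by
  have h1 : HasFDerivAt (fun W' => (1 / (n : ℝ)) * ∑ i, myPhi (myC σ a x y i W'))
      ((1 / (n : ℝ)) • (∑ i, myPhi' (myC σ a x y i W) • DcMap σ a x y i W)) W := by
    have := HasFDerivAt.fun_sum (fun i (_ : i ∈ Finset.univ) =>
      (myPhi_hasDerivAt (myC σ a x y i W)).comp_hasFDerivAt W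
        (c_hasFDerivAt σ a x y hσ i W))
    exact this.const_mul _ |>.congr_fderiv rfl
  have h2 : HasFDerivAt (fun W' : ESp p d => (lam / 2) * ‖W'‖ ^ 2)
      (lam • innerSL ℝ W) W := by
    have h := ((hasFDerivAt_id W).inner ℝ (hasFDerivAt_id W)).const_mul (lam / 2)
    simp only [id_eq] at h
    have he : (fun W' : ESp p d => (lam / 2) * (inner ℝ W' W' : ℝ))
        = fun W' : ESp p d => (lam / 2) * ‖W'‖ ^ 2 := by
      funext W'; rw [real_inner_self_eq_norm_sq]
    rw [he] at h
    refine h.congr_fderiv ?_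
    symm
    ext u
    simp [fderivInnerCLM, real_inner_comm W u]
    ring
  have h := h1.fun_add h2
  have : (fun W' => (1 / (n : ℝ)) * ∑ i, myPhi (myC σ a x y i W') + (lam / 2) * ‖W'‖ ^ 2)
      = risk σ a x y lam := by funext W'; rw [risk_eq]
  rw [this] at h
  exact h

def gradVec (W : ESp p d) : ESp p d :=
  (∑ i, ∑ j, ((1 / (n : ℝ)) * myPhi' (myC σ a x y i W)
    * (-(y i) * (a j * deriv σ (myTheta x i j W)))) • myVec x i j) + lam • W

lemma risk_hasGradientAt (hσ : Differentiable ℝ σ) (W : ESp p d) :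
    HasGradientAt (risk σ a x y lam) (gradVec σ a x y lam W) W := by
  rw [hasGradientAt_iff_hasFDerivAt]
  have h := risk_hasFDerivAt σ a x y lam hσ W
  refine h.congr_fderiv ?_
  symm
  ext u
  simp only [InnerProductSpace.toDual_apply_apply, gradVec, inner_add_left, sum_inner,
    real_inner_smul_left, riskD, ContinuousLinearMap.add_apply,
    ContinuousLinearMap.smul_apply, ContinuousLinearMap.sum_apply, DcMap,
    innerSL_apply_apply, smul_eq_mul]
  congr 1
  rw [Finset.mul_sum]
  refine Finset.sum_congr rfl fun i _ => ?_
  rw [Finset.mul_sum, Finset.mul_sum]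
  exact Finset.sum_congr rfl fun j _ => by ring

lemma coord_abs_le_norm' {ι : Type*} [Fintype ι] [DecidableEq ι]
    (v : EuclideanSpace ℝ ι) (i : ι) : |v i| ≤ ‖v‖ := by
  have h := abs_real_inner_le_norm (EuclideanSpace.single i (1:ℝ)) v
  simpa [EuclideanSpace.inner_single_left] using h

lemma myVec_norm (i : Fin n) (j : Fin p) :
    ‖(myVec x i j : ESp p d)‖ = ‖x i‖ := by
  simp only [EuclideanSpace.norm_eq, myVec]
  congr 1
  simp only [Fintype.sum_prod_type]
  rw [Finset.sum_comm]
  simp [apply_ite (fun t : ℝ => ‖t‖ ^ 2)]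

lemma abs_myPhi'_le (t : ℝ) : |myPhi' t| ≤ 1 := by
  have h := one_add_exp_pos t
  have he := Real.exp_pos t
  rw [abs_of_nonneg (by unfold myPhi'; positivity)]
  rw [myPhi', div_le_one h]; linarith

lemma Z_norm_le {M_D Bx : ℝ} (hy : ∀ i, y i = 1 ∨ y i = -1)
    (hM : ∀ t, |deriv σ t| ≤ M_D) (hx : ∀ i, ‖x i‖ ≤ Bx) (hBx : 0 ≤ Bx)
    (W : ESp p d) :
    ‖gradVec σ a x y lam W - lam • W‖ ≤ (n : ℝ) * ((p : ℝ) * ((1 / (n : ℝ)) * (‖a‖ * M_D) * Bx)) := by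
  have hMD : 0 ≤ M_D := le_trans (abs_nonneg _) (hM 0)
  have hZ : gradVec σ a x y lam W - lam • W
      = ∑ i, ∑ j, ((1 / (n : ℝ)) * myPhi' (myC σ a x y i W)
        * (-(y i) * (a j * deriv σ (myTheta x i j W)))) • myVec x i j := by
    unfold gradVec; abel
  rw [hZ]
  refine le_trans (norm_sum_le _ _) ?_
  have hn : ∀ i : Fin n, ‖∑ j, ((1 / (n : ℝ)) * myPhi' (myC σ a x y i W)
      * (-(y i) * (a j * deriv σ (myTheta x i j W)))) • (myVec x i j : ESp p d)‖
      ≤ (p : ℝ) * ((1 / (n : ℝ)) * (‖a‖ * M_D) * Bx) := by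
    intro i
    refine le_trans (norm_sum_le _ _) ?_
    have hj : ∀ j : Fin p, ‖((1 / (n : ℝ)) * myPhi' (myC σ a x y i W)
        * (-(y i) * (a j * deriv σ (myTheta x i j W)))) • (myVec x i j : ESp p d)‖
        ≤ (1 / (n : ℝ)) * (‖a‖ * M_D) * Bx := by
      intro j
      rw [norm_smul, myVec_norm, Real.norm_eq_abs]
      have hy1 : |(-(y i))| = 1 := by rcases hy i with h | h <;> simp [h]
      have h1 : |(1 / (n : ℝ)) * myPhi' (myC σ a x y i W)
          * (-(y i) * (a j * deriv σ (myTheta x i j W)))|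
          ≤ (1 / (n : ℝ)) * (‖a‖ * M_D) := by
        rw [abs_mul, abs_mul, abs_mul, hy1, one_mul, abs_mul]
        have hn0 : (0:ℝ) ≤ 1 / (n : ℝ) := by positivity
        calc |1 / (n:ℝ)| * |myPhi' (myC σ a x y i W)| * (|a j| * |deriv σ (myTheta x i j W)|)
            ≤ (1 / (n:ℝ)) * 1 * (‖a‖ * M_D) := by
              refine mul_le_mul ?_ ?_ (by positivity) (by positivity)
              · rw [abs_of_nonneg hn0]
                exact mul_le_mul_of_nonneg_left (abs_myPhi'_le _) hn0
              · exact mul_le_mul (coord_abs_le_norm' a j) (hM _) (abs_nonneg _) (norm_nonneg _)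
          _ = (1 / (n:ℝ)) * (‖a‖ * M_D) := by ring
      exact mul_le_mul h1 (hx i) (norm_nonneg _) (by positivity)
    refine le_trans (Finset.sum_le_sum fun j _ => hj j) ?_
    simp [Finset.sum_const, Finset.card_univ]
  refine le_trans (Finset.sum_le_sum fun i _ => hn i) ?_
  simp [Finset.sum_const, Finset.card_univ]

lemma G_eq (hσ : Differentiable ℝ σ) (q : Fin p × Fin d) :
    (fun W' : ESp p d => fderiv ℝ (risk σ a x y lam) W' (EuclideanSpace.single q 1))
    = fun W' : ESp p d => (∑ i, ((1 / (n : ℝ)) * (-(y i) * (a q.1 * x i q.2)))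
        * (myPhi' (myC σ a x y i W') * deriv σ (myTheta x i q.1 W'))) + lam * W' q := by
  funext W'
  rw [(risk_hasGradientAt σ a x y lam hσ W').hasFDerivAt.fderiv]
  rw [InnerProductSpace.toDual_apply_apply]
  unfold gradVec
  rw [inner_add_left, sum_inner]
  simp only [sum_inner, real_inner_smul_left, EuclideanSpace.inner_single_right,
    conj_trivial, mul_one, real_inner_smul_left]
  congr 1
  · refine Finset.sum_congr rfl fun i _ => ?_
    have hcol : ∀ j : Fin p, (myVec x i j : ESp p d) q = if q.1 = j then x i q.2 else 0 :=
      fun j => rfl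
    simp_rw [PiLp.smul_apply, smul_eq_mul, one_mul, hcol, mul_ite, mul_zero]
    rw [Finset.sum_ite_eq]
    simp only [Finset.mem_univ, if_true]
    ring
  · rw [PiLp.smul_apply, smul_eq_mul]; ring

def myPhi'' (t : ℝ) : ℝ := Real.exp t / (1 + Real.exp t) ^ 2
lemma myPhi'_hasDerivAt (t : ℝ) : HasDerivAt myPhi' (myPhi'' t) t := by
  have h1 : HasDerivAt (fun u : ℝ => 1 + Real.exp u) (Real.exp t) t :=
    (Real.hasDerivAt_exp t).const_add 1
  have h := (Real.hasDerivAt_exp t).fun_div h1 (ne_of_gt (one_add_exp_pos t))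
  have he : (Real.exp t * (1 + Real.exp t) - Real.exp t * Real.exp t) / (1 + Real.exp t) ^ 2
      = myPhi'' t := by
    unfold myPhi''; ring
  show HasDerivAt (fun u => Real.exp u / (1 + Real.exp u)) (myPhi'' t) t
  simpa [myPhi', he] using h
lemma abs_myPhi''_le (t : ℝ) : |myPhi'' t| ≤ 1 := by
  have h := one_add_exp_pos t
  have he := Real.exp_pos t
  rw [abs_of_nonneg (by unfold myPhi''; positivity)]
  rw [myPhi'', div_le_one (by positivity)]; nlinarith

lemma secondPartial_risk_le {M_D M_D' Bx : ℝ}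
    (hσ2 : Differentiable ℝ σ) (hσ2' : Differentiable ℝ (deriv σ))
    (hy : ∀ i, y i = 1 ∨ y i = -1)
    (hM : ∀ t, |deriv σ t| ≤ M_D) (hM' : ∀ t, |deriv (deriv σ) t| ≤ M_D')
    (hx : ∀ i, ‖x i‖ ≤ Bx) (hBx : 0 ≤ Bx) (W : ESp p d) (q : Fin p × Fin d) :
    secondPartial (risk σ a x y lam) W q
      ≤ lam + (n : ℝ) * ((1 / (n : ℝ)) * (‖a‖ * Bx)
          * (M_D' * Bx + M_D * (‖a‖ * M_D * Bx))) := by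
  have hMD : 0 ≤ M_D := le_trans (abs_nonneg _) (hM 0)
  have hMD' : 0 ≤ M_D' := le_trans (abs_nonneg _) (hM' 0)
  unfold secondPartial
  rw [G_eq σ a x y lam hσ2 q]
  -- derivative of the linear part
  have hlin : HasFDerivAt (fun W' : ESp p d => lam * W' q)
      (lam • innerSL ℝ (EuclideanSpace.single q (1:ℝ))) W := by
    have h := ((innerSL ℝ (EuclideanSpace.single q (1:ℝ))).hasFDerivAt (x := W)).const_mul lam
    have he : (fun W' : ESp p d => lam * (innerSL ℝ (EuclideanSpace.single q (1:ℝ)) W'))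
        = fun W' : ESp p d => lam * W' q := by
      funext W'
      simp [EuclideanSpace.inner_single_left]
    rwa [he] at h
  have hterm : ∀ i : Fin n, HasFDerivAt
      (fun W' => myPhi' (myC σ a x y i W') * deriv σ (myTheta x i q.1 W'))
      (myPhi' (myC σ a x y i W) • (deriv (deriv σ) (myTheta x i q.1 W) • innerSL ℝ (myVec x i q.1))
        + deriv σ (myTheta x i q.1 W) • (myPhi'' (myC σ a x y i W) • DcMap σ a x y i W)) W := by
    intro i
    have h1 : HasFDerivAt (fun W' => myPhi' (myC σ a x y i W'))
        (myPhi'' (myC σ a x y i W) • DcMap σ a x y i W) W :=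
      (myPhi'_hasDerivAt (myC σ a x y i W)).comp_hasFDerivAt W (c_hasFDerivAt σ a x y hσ2 i W)
    have h2 : HasFDerivAt (fun W' => deriv σ (myTheta x i q.1 W'))
        (deriv (deriv σ) (myTheta x i q.1 W) • innerSL ℝ (myVec x i q.1)) W :=
      ((hσ2' (myTheta x i q.1 W)).hasDerivAt).comp_hasFDerivAt W (theta_hasFDerivAt x i q.1 W)
    exact h1.mul h2
  have hG : HasFDerivAt
      (fun W' : ESp p d => (∑ i, ((1 / (n : ℝ)) * (-(y i) * (a q.1 * x i q.2)))
        * (myPhi' (myC σ a x y i W') * deriv σ (myTheta x i q.1 W'))) + lam * W' q)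
      ((∑ i, ((1 / (n : ℝ)) * (-(y i) * (a q.1 * x i q.2)))
          • (myPhi' (myC σ a x y i W) • (deriv (deriv σ) (myTheta x i q.1 W) • innerSL ℝ (myVec x i q.1))
            + deriv σ (myTheta x i q.1 W) • (myPhi'' (myC σ a x y i W) • DcMap σ a x y i W)))
        + lam • innerSL ℝ (EuclideanSpace.single q (1:ℝ))) W :=
    (HasFDerivAt.fun_sum fun i _ => (hterm i).const_mul _).add hlin
  rw [hG.fderiv]
  -- evaluate the derivative at `single q 1`
  have hv : ∀ i : Fin n, (innerSL ℝ (myVec x i q.1 : ESp p d)) (EuclideanSpace.single q 1)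
      = x i q.2 := by
    intro i
    have : (myVec x i q.1 : ESp p d) q = x i q.2 := by
      simp [myVec]
    simp [EuclideanSpace.inner_single_right, this]
  have hDc : ∀ i : Fin n, (DcMap σ a x y i W) (EuclideanSpace.single q 1)
      = -(y i) * (a q.1 * deriv σ (myTheta x i q.1 W)) * x i q.2 := by
    intro i
    unfold DcMap
    rw [ContinuousLinearMap.sum_apply]
    have hj : ∀ j : Fin p, ((-(y i) * (a j * deriv σ (myTheta x i j W)))
        • innerSL ℝ (myVec x i j : ESp p d)) (EuclideanSpace.single q 1)
        = if q.1 = j then -(y i) * (a j * deriv σ (myTheta x i j W)) * x i q.2 else 0 := by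
      intro j
      have : (myVec x i j : ESp p d) q = if q.1 = j then x i q.2 else 0 := rfl
      simp only [ContinuousLinearMap.smul_apply, smul_eq_mul, innerSL_apply_apply,
        EuclideanSpace.inner_single_right, conj_trivial, one_mul, this]
      split <;> ring
    simp_rw [hj]
    rw [Finset.sum_ite_eq]
    simp
  have hself : (innerSL ℝ (EuclideanSpace.single q (1:ℝ))) (EuclideanSpace.single q 1) = 1 := by
    simp [EuclideanSpace.inner_single_left, EuclideanSpace.single_apply]
  simp only [ContinuousLinearMap.add_apply, ContinuousLinearMap.sum_apply,
    ContinuousLinearMap.smul_apply, smul_eq_mul, hv, hself, mul_one]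
  simp_rw [hDc]
  rw [add_comm]
  refine add_le_add le_rfl ?_
  refine le_trans (Finset.sum_le_sum (fun i (_ : i ∈ Finset.univ) => le_abs_self _)) ?_
  have hbound : ∀ i : Fin n,
      |1 / (n:ℝ) * (-(y i) * (a q.1 * x i q.2))
        * (myPhi' (myC σ a x y i W) * (deriv (deriv σ) (myTheta x i q.1 W) * x i q.2)
          + deriv σ (myTheta x i q.1 W) * (myPhi'' (myC σ a x y i W)
            * (-(y i) * (a q.1 * deriv σ (myTheta x i q.1 W)) * x i q.2)))|
      ≤ (1 / (n : ℝ)) * (‖a‖ * Bx) * (M_D' * Bx + M_D * (‖a‖ * M_D * Bx)) := by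
    intro i
    have hy1 : |y i| = 1 := by rcases hy i with h | h <;> simp [h]
    have hxq : |x i q.2| ≤ Bx := le_trans (coord_abs_le_norm' (x i) q.2) (hx i)
    have haq : |a q.1| ≤ ‖a‖ := coord_abs_le_norm' a q.1
    have hn0 : (0:ℝ) ≤ 1 / (n : ℝ) := by positivity
    rw [abs_mul, abs_mul, abs_mul, abs_neg, hy1, one_mul, abs_mul]
    refine mul_le_mul ?_ ?_ (abs_nonneg _) (by positivity)
    · rw [abs_of_nonneg hn0]
      exact mul_le_mul_of_nonneg_left (mul_le_mul haq hxq (abs_nonneg _) (norm_nonneg _)) hn0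
    · refine le_trans (abs_add_le _ _) (add_le_add ?_ ?_)
      · rw [abs_mul, abs_mul]
        calc |myPhi' (myC σ a x y i W)| * (|deriv (deriv σ) (myTheta x i q.1 W)| * |x i q.2|)
            ≤ 1 * (M_D' * Bx) :=
              mul_le_mul (abs_myPhi'_le _)
                (mul_le_mul (hM' _) hxq (abs_nonneg _) hMD') (by positivity) one_pos.le
          _ = M_D' * Bx := one_mul _
      · rw [abs_mul, abs_mul, abs_mul, abs_mul, abs_neg, hy1, one_mul, abs_mul]
        calc |deriv σ (myTheta x i q.1 W)| * (|myPhi'' (myC σ a x y i W)|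
              * (|a q.1| * |deriv σ (myTheta x i q.1 W)| * |x i q.2|))
            ≤ M_D * (1 * (‖a‖ * M_D * Bx)) := by
              refine mul_le_mul (hM _) ?_ (by positivity) hMD
              refine mul_le_mul (abs_myPhi''_le _) ?_ (by positivity) one_pos.le
              refine mul_le_mul (mul_le_mul haq (hM _) (abs_nonneg _) (norm_nonneg _)) hxq
                (abs_nonneg _) (by positivity)
          _ = M_D * (‖a‖ * M_D * Bx) := by ring
  refine le_trans (Finset.sum_le_sum fun i _ => hbound i) ?_
  simp [Finset.sum_const, Finset.card_univ]

end

/-- If `λ > M_D L B_x² ‖a‖²/2`, then for every `s > 0` the Villani drift quantity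
`(1/s)‖∇L̃(W)‖² − ΔL̃(W)` tends to `+∞` as `‖W‖_F → ∞`. -/
theorem villani_drift_condition {p d n : ℕ} (hn : 0 < n) (σ : ℝ → ℝ)
    (M_D M_D' L Bx lam : ℝ)
    (hσ : ContDiff ℝ 2 σ) (hM : ∀ t : ℝ, |deriv σ t| ≤ M_D)
    (hM' : ∀ t : ℝ, |deriv (deriv σ) t| ≤ M_D')
    (hLip : ∀ s t : ℝ, |σ s - σ t| ≤ L * |s - t|) (hL : 0 ≤ L)
    (a : EuclideanSpace ℝ (Fin p))
    (x : Fin n → EuclideanSpace ℝ (Fin d)) (y : Fin n → ℝ)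
    (hx : ∀ i, ‖x i‖ ≤ Bx) (hBx : 0 ≤ Bx) (hy : ∀ i, y i = 1 ∨ y i = -1)
    (hlam : lam > M_D * L * Bx ^ 2 * ‖a‖ ^ 2 / 2)
    (s : ℝ) (hs : 0 < s) :
    Filter.Tendsto
      (fun W : EuclideanSpace ℝ (Fin p × Fin d) =>
        (1 / s) * ‖gradient (risk σ a x y lam) W‖ ^ 2 - lap (risk σ a x y lam) W)
      (Filter.comap norm Filter.atTop) Filter.atTop := by
  
  have hσd : Differentiable ℝ σ := hσ.differentiable (by norm_num)
  have hσ'd : Differentiable ℝ (deriv σ) := by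
    have h2 : ContDiff ℝ ((1:WithTop ℕ∞) + 1) σ := by norm_num at hσ ⊢; exact hσ
    exact (contDiff_succ_iff_deriv.mp h2).2.2.differentiable one_ne_zero
  have hMD : 0 ≤ M_D := le_trans (abs_nonneg _) (hM 0)
  have hMD' : 0 ≤ M_D' := le_trans (abs_nonneg _) (hM' 0)
  have hlam0 : 0 < lam :=
    lt_of_le_of_lt (div_nonneg (mul_nonneg (mul_nonneg (mul_nonneg hMD hL)
      (sq_nonneg Bx)) (sq_nonneg ‖a‖)) two_pos.le) hlam
  set K1 : ℝ := (n : ℝ) * ((p : ℝ) * ((1 / (n : ℝ)) * (‖a‖ * M_D) * Bx)) with hK1def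
  set K2 : ℝ := lam + (n : ℝ) * ((1 / (n : ℝ)) * (‖a‖ * Bx)
      * (M_D' * Bx + M_D * (‖a‖ * M_D * Bx))) with hK2def
  set Kl : ℝ := (Fintype.card (Fin p × Fin d) : ℝ) * K2 with hKldef
  have hK1 : 0 ≤ K1 := by positivity
  -- lower bound on the gradient norm
  have hgrad : ∀ W : ESp p d, lam * ‖W‖ - K1 ≤ ‖gradient (risk σ a x y lam) W‖ := by
    intro W
    rw [(risk_hasGradientAt σ a x y lam hσd W).gradient]
    have h1 : ‖lam • W‖ - ‖gradVec σ a x y lam W - lam • W‖ ≤ ‖gradVec σ a x y lam W‖ := by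
      have := norm_sub_norm_le (lam • W) (lam • W - gradVec σ a x y lam W)
      simp only [sub_sub_cancel] at this
      rw [norm_sub_rev (lam • W)] at this
      linarith
    have h2 : ‖lam • W‖ = lam * ‖W‖ := by
      rw [norm_smul, Real.norm_eq_abs, abs_of_pos hlam0]
    have h3 := Z_norm_le σ a x y lam hy hM hx hBx W
    rw [h2] at h1
    linarith
  -- upper bound on the Laplacian
  have hlap : ∀ W : ESp p d, lap (risk σ a x y lam) W ≤ Kl := by
    intro W
    unfold lap
    refine le_trans (Finset.sum_le_sum fun q _ =>
      secondPartial_risk_le σ a x y lam hσd hσ'd hy hM hM' hx hBx W q) ?_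
    rw [Finset.sum_const, Finset.card_univ, nsmul_eq_mul, hKldef]
  -- the comparison function
  set F : ℝ → ℝ := fun r => (1 / s) * (lam * r - K1) ^ 2 - Kl with hFdef
  have hF : Tendsto F atTop atTop := by
    have h1 : Tendsto (fun r : ℝ => lam * r - K1) atTop atTop := by
      have := (tendsto_id (α := ℝ)).const_mul_atTop hlam0
      simpa [sub_eq_add_neg] using tendsto_atTop_add_const_right atTop (-K1) this
    have h2 : Tendsto (fun r : ℝ => (lam * r - K1) ^ 2) atTop atTop := by
      have := h1.atTop_mul_atTop₀ h1
      simpa [sq] using this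
    have h3 := h2.const_mul_atTop (by positivity : (0:ℝ) < 1 / s)
    simpa [hFdef, sub_eq_add_neg] using tendsto_atTop_add_const_right atTop (-Kl) h3
  refine tendsto_atTop_mono' _ ?_ (hF.comp tendsto_comap)
  have hev : ∀ᶠ W : ESp p d in comap norm atTop, K1 / lam ≤ ‖W‖ :=
    tendsto_comap.eventually (eventually_ge_atTop (K1 / lam))
  filter_upwards [hev] with W hW
  have hpos : 0 ≤ lam * ‖W‖ - K1 := by
    rw [div_le_iff₀ hlam0] at hW
    nlinarith
  have hsq : (lam * ‖W‖ - K1) ^ 2 ≤ ‖gradient (risk σ a x y lam) W‖ ^ 2 :=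
    pow_le_pow_left₀ hpos (hgrad W) 2
  have h1 : (1 / s) * (lam * ‖W‖ - K1) ^ 2 ≤ (1 / s) * ‖gradient (risk σ a x y lam) W‖ ^ 2 :=
    mul_le_mul_of_nonneg_left hsq (by positivity)
  have h2 := hlap W
  simp only [Function.comp, hFdef]
  linarith
end

section
/- Under the stated assumptions on σ and the data, if λ > M_D·L·B_x²·‖a‖₂²/2, then the regularized logistic empirical risk L̃ is a Villani function on ℝ^{p×d}: (1) L̃ is C^∞; (2) L̃(W) → +∞ as ‖W‖_F → ∞; (3) for every s > 0, ∫_{ℝ^{p×d}} exp(−2·L̃(W)/s) dW < ∞; and (4) for every s > 0, −ΔL̃(W) + (1/s)·‖∇L̃(W)‖² → +∞ as ‖W‖_F → ∞. In particular this holds with no assumption on the width p or on the training data beyond ‖x_i‖₂ ≤ B_x. -/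
open MeasureTheory Real Filter

namespace VillaniAux

noncomputable def Lg (t : ℝ) : ℝ := Real.log (1 + Real.exp t)
noncomputable def Lg' (t : ℝ) : ℝ := Real.exp t / (1 + Real.exp t)
noncomputable def Lg'' (t : ℝ) : ℝ := Real.exp t / (1 + Real.exp t) ^ 2

lemma one_add_exp_pos (t : ℝ) : 0 < 1 + Real.exp t := by positivity

lemma hasDerivAt_Lg (t : ℝ) : HasDerivAt Lg (Lg' t) t := by
  have h : HasDerivAt (fun u : ℝ => 1 + Real.exp u) (Real.exp t) t :=
    (Real.hasDerivAt_exp t).const_add 1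
  show HasDerivAt (fun u => Real.log (1 + Real.exp u)) (Lg' t) t
  simpa [Lg'] using h.log (one_add_exp_pos t).ne'

lemma hasDerivAt_Lg' (t : ℝ) : HasDerivAt Lg' (Lg'' t) t := by
  have h := (Real.hasDerivAt_exp t).div ((Real.hasDerivAt_exp t).const_add 1)
    (one_add_exp_pos t).ne'
  refine HasDerivAt.congr_deriv h ?_
  have h2 := (one_add_exp_pos t).ne'
  rw [Lg'']
  ring

lemma Lg_nonneg (t : ℝ) : 0 ≤ Lg t :=
  Real.log_nonneg (by linarith [Real.exp_pos t])

lemma Lg'_nonneg (t : ℝ) : 0 ≤ Lg' t := by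
  rw [Lg']; positivity

lemma Lg'_abs_le (t : ℝ) : |Lg' t| ≤ 1 := by
  rw [abs_of_nonneg (Lg'_nonneg t), Lg', div_le_one (one_add_exp_pos t)]
  linarith

lemma Lg''_abs_le (t : ℝ) : |Lg'' t| ≤ 1 := by
  have h0 : 0 ≤ Lg'' t := by rw [Lg'']; positivity
  rw [abs_of_nonneg h0, Lg'', div_le_one (by positivity)]
  nlinarith [Real.exp_pos t]

lemma Lg_lip (s t : ℝ) : |Lg s - Lg t| ≤ |s - t| := by
  have hd : Differentiable ℝ Lg := fun u => (hasDerivAt_Lg u).differentiableAt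
  have h : LipschitzWith 1 Lg := by
    apply lipschitzWith_of_nnnorm_deriv_le hd
    intro u
    rw [(hasDerivAt_Lg u).deriv, ← NNReal.coe_le_coe]
    push_cast
    simpa [Real.norm_eq_abs] using Lg'_abs_le u
  simpa [Real.dist_eq] using h.dist_le_mul s t

end VillaniAux

namespace VillaniAux

noncomputable def loss {p d n : ℕ} (σ : ℝ → ℝ) (a : EuclideanSpace ℝ (Fin p))
    (x : Fin n → EuclideanSpace ℝ (Fin d)) (y : Fin n → ℝ)
    (W : EuclideanSpace ℝ (Fin p × Fin d)) : ℝ :=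
  (1 / (n : ℝ)) * ∑ i, Real.log (1 + Real.exp (-(y i) * net σ a W (x i)))

variable {p d n : ℕ} {σ : ℝ → ℝ} {a : EuclideanSpace ℝ (Fin p)}
  {x : Fin n → EuclideanSpace ℝ (Fin d)} {y : Fin n → ℝ} {lam : ℝ}

lemma risk_eq : risk σ a x y lam = fun W => loss σ a x y W + (lam / 2) * ‖W‖ ^ 2 := rfl

lemma norm_row_le (V : EuclideanSpace ℝ (Fin p × Fin d)) (j : Fin p) :
    ‖row V j‖ ≤ ‖V‖ := by
  rw [EuclideanSpace.norm_eq, EuclideanSpace.norm_eq]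
  apply Real.sqrt_le_sqrt
  have : ∑ k, ‖row V j k‖ ^ 2 = ∑ k, ‖V (j, k)‖ ^ 2 := rfl
  rw [this, Fintype.sum_prod_type]
  exact Finset.single_le_sum
    (f := fun j' => ∑ k, ‖V (j', k)‖ ^ 2)
    (fun j' _ => Finset.sum_nonneg fun k _ => sq_nonneg _) (Finset.mem_univ j)

lemma row_sub (V V' : EuclideanSpace ℝ (Fin p × Fin d)) (j : Fin p) :
    row (V - V') j = row V j - row V' j := rfl

lemma row_add_smul (V V' : EuclideanSpace ℝ (Fin p × Fin d)) (t : ℝ) (j : Fin p) :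
    row (V + t • V') j = row V j + t • row V' j := rfl

lemma contDiff_inner_row (j : Fin p) (v : EuclideanSpace ℝ (Fin d)) :
    ContDiff ℝ (⊤ : ℕ∞) (fun W : EuclideanSpace ℝ (Fin p × Fin d) => (inner ℝ (row W j) v : ℝ)) := by
  have h : (fun W : EuclideanSpace ℝ (Fin p × Fin d) => (inner ℝ (row W j) v : ℝ))
      = fun W => ∑ k, W (j, k) * v k := by
    funext W
    simp [PiLp.inner_apply, RCLike.inner_apply, row]
    exact Finset.sum_congr rfl fun _ _ => mul_comm _ _
  rw [h]
  exact ContDiff.sum fun k _ =>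
    ((EuclideanSpace.proj (𝕜 := ℝ) ((j, k) : Fin p × Fin d)).contDiff).mul contDiff_const

lemma contDiff_net (hσ : ContDiff ℝ (⊤ : ℕ∞) σ) (v : EuclideanSpace ℝ (Fin d)) :
    ContDiff ℝ (⊤ : ℕ∞) (fun W : EuclideanSpace ℝ (Fin p × Fin d) => net σ a W v) :=
  ContDiff.sum fun j _ => contDiff_const.mul (hσ.comp (contDiff_inner_row j v))

lemma contDiff_loss (hσ : ContDiff ℝ (⊤ : ℕ∞) σ) :
    ContDiff ℝ (⊤ : ℕ∞) (loss σ a x y) := by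
  apply ContDiff.mul contDiff_const
  apply ContDiff.sum
  intro i _
  have h1 : ContDiff ℝ (⊤ : ℕ∞) (fun W : EuclideanSpace ℝ (Fin p × Fin d) =>
      1 + Real.exp (-(y i) * net σ a W (x i))) :=
    contDiff_const.add (Real.contDiff_exp.comp (contDiff_const.mul (contDiff_net hσ (x i))))
  exact h1.log fun W => (one_add_exp_pos _).ne'

lemma contDiff_risk (hσ : ContDiff ℝ (⊤ : ℕ∞) σ) :
    ContDiff ℝ (⊤ : ℕ∞) (risk σ a x y lam) := by
  rw [risk_eq]
  exact (contDiff_loss hσ).add (contDiff_const.mul (contDiff_norm_sq ℝ))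

end VillaniAux

section LIP
namespace VillaniAux

variable {p d n : ℕ} {σ : ℝ → ℝ} {a : EuclideanSpace ℝ (Fin p)}
  {x : Fin n → EuclideanSpace ℝ (Fin d)} {y : Fin n → ℝ} {lam L Bx : ℝ}

lemma abs_inner_row_le (V : EuclideanSpace ℝ (Fin p × Fin d)) (j : Fin p)
    (v : EuclideanSpace ℝ (Fin d)) : |(inner ℝ (row V j) v : ℝ)| ≤ ‖V‖ * ‖v‖ :=
  le_trans (abs_real_inner_le_norm _ _)
    (mul_le_mul_of_nonneg_right (norm_row_le V j) (norm_nonneg v))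

lemma net_sub_le (hLip : ∀ s t : ℝ, |σ s - σ t| ≤ L * |s - t|) (hL : 0 ≤ L)
    {v : EuclideanSpace ℝ (Fin d)} (hv : ‖v‖ ≤ Bx)
    (W W' : EuclideanSpace ℝ (Fin p × Fin d)) :
    |net σ a W v - net σ a W' v| ≤ (L * Bx * ∑ j, |a j|) * ‖W - W'‖ := by
  have hBx0 : 0 ≤ Bx := le_trans (norm_nonneg v) hv
  have key : ∀ j : Fin p,
      |a j * σ (inner ℝ (row W j) v : ℝ) - a j * σ (inner ℝ (row W' j) v : ℝ)|
        ≤ |a j| * (L * (Bx * ‖W - W'‖)) := by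
    intro j
    rw [← mul_sub, abs_mul]
    apply mul_le_mul_of_nonneg_left _ (abs_nonneg _)
    refine le_trans (hLip _ _) (mul_le_mul_of_nonneg_left ?_ hL)
    have h1 : (inner ℝ (row W j) v : ℝ) - (inner ℝ (row W' j) v : ℝ)
        = (inner ℝ (row (W - W') j) v : ℝ) := by
      rw [row_sub, inner_sub_left]
    rw [h1]
    refine le_trans (abs_inner_row_le _ _ _) ?_
    calc ‖W - W'‖ * ‖v‖ ≤ ‖W - W'‖ * Bx :=
          mul_le_mul_of_nonneg_left hv (norm_nonneg _)
      _ = Bx * ‖W - W'‖ := mul_comm _ _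
  calc |net σ a W v - net σ a W' v|
      = |∑ j, (a j * σ (inner ℝ (row W j) v : ℝ) - a j * σ (inner ℝ (row W' j) v : ℝ))| := by
        rw [net, net, ← Finset.sum_sub_distrib]
    _ ≤ ∑ j, |a j * σ (inner ℝ (row W j) v : ℝ) - a j * σ (inner ℝ (row W' j) v : ℝ)| :=
        Finset.abs_sum_le_sum_abs _ _
    _ ≤ ∑ j, |a j| * (L * (Bx * ‖W - W'‖)) := Finset.sum_le_sum fun j _ => key j
    _ = (L * Bx * ∑ j, |a j|) * ‖W - W'‖ := by rw [← Finset.sum_mul]; ring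

lemma loss_sub_le (hLip : ∀ s t : ℝ, |σ s - σ t| ≤ L * |s - t|) (hL : 0 ≤ L)
    (hx : ∀ i, ‖x i‖ ≤ Bx) (hBx : 0 ≤ Bx) (hy : ∀ i, y i = 1 ∨ y i = -1)
    (W W' : EuclideanSpace ℝ (Fin p × Fin d)) :
    |loss σ a x y W - loss σ a x y W'| ≤ (L * Bx * ∑ j, |a j|) * ‖W - W'‖ := by
  have habs : ∀ i, |y i| = 1 := by
    intro i; rcases hy i with h | h <;> rw [h] <;> norm_num
  have key : ∀ i : Fin n,
      |Real.log (1 + Real.exp (-(y i) * net σ a W (x i)))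
        - Real.log (1 + Real.exp (-(y i) * net σ a W' (x i)))|
      ≤ (L * Bx * ∑ j, |a j|) * ‖W - W'‖ := by
    intro i
    refine le_trans (Lg_lip _ _) ?_
    have h1 : -(y i) * net σ a W (x i) - -(y i) * net σ a W' (x i)
        = -(y i) * (net σ a W (x i) - net σ a W' (x i)) := by ring
    rw [h1, abs_mul, abs_neg, habs i, one_mul]
    exact net_sub_le hLip hL (hx i) W W'
  have hn0 : (0:ℝ) ≤ 1 / (n : ℝ) := by positivity
  calc |loss σ a x y W - loss σ a x y W'|
      = (1 / (n : ℝ)) * |∑ i, (Real.log (1 + Real.exp (-(y i) * net σ a W (x i)))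
          - Real.log (1 + Real.exp (-(y i) * net σ a W' (x i))))| := by
        rw [loss, loss, ← mul_sub, abs_mul, abs_of_nonneg hn0, ← Finset.sum_sub_distrib]
    _ ≤ (1 / (n : ℝ)) * ∑ i : Fin n, (L * Bx * ∑ j, |a j|) * ‖W - W'‖ := by
        apply mul_le_mul_of_nonneg_left _ hn0
        exact le_trans (Finset.abs_sum_le_sum_abs _ _) (Finset.sum_le_sum fun i _ => key i)
    _ ≤ (L * Bx * ∑ j, |a j|) * ‖W - W'‖ := by
        rw [Finset.sum_const, Finset.card_univ, Fintype.card_fin, nsmul_eq_mul]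
        rcases Nat.eq_zero_or_pos n with h | h
        · subst h; simp; positivity
        · have : (1 / (n:ℝ)) * ((n:ℝ) * ((L * Bx * ∑ j, |a j|) * ‖W - W'‖))
              = (L * Bx * ∑ j, |a j|) * ‖W - W'‖ := by
            field_simp
          rw [this]

lemma norm_fderiv_loss_le (hLip : ∀ s t : ℝ, |σ s - σ t| ≤ L * |s - t|) (hL : 0 ≤ L)
    (hx : ∀ i, ‖x i‖ ≤ Bx) (hBx : 0 ≤ Bx) (hy : ∀ i, y i = 1 ∨ y i = -1)
    (W : EuclideanSpace ℝ (Fin p × Fin d)) :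
    ‖fderiv ℝ (loss σ a x y) W‖ ≤ L * Bx * ∑ j, |a j| := by
  have hC : 0 ≤ L * Bx * ∑ j, |a j| := by positivity
  refine norm_fderiv_le_of_lip' ℝ hC (Filter.Eventually.of_forall fun V => ?_)
  simpa [Real.norm_eq_abs] using loss_sub_le hLip hL hx hBx hy V W

end VillaniAux
end LIP
section GRAD
namespace VillaniAux

variable {p d n : ℕ} {σ : ℝ → ℝ} {a : EuclideanSpace ℝ (Fin p)}
  {x : Fin n → EuclideanSpace ℝ (Fin d)} {y : Fin n → ℝ} {lam L Bx : ℝ}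

lemma fderiv_risk_apply_self (hσ : ContDiff ℝ (⊤ : ℕ∞) σ)
    (W : EuclideanSpace ℝ (Fin p × Fin d)) :
    fderiv ℝ (risk σ a x y lam) W W
      = fderiv ℝ (loss σ a x y) W W + lam * ‖W‖ ^ 2 := by
  have hinner : HasFDerivAt (fun V : EuclideanSpace ℝ (Fin p × Fin d) => (inner ℝ V V : ℝ))
      ((fderivInnerCLM ℝ (W, W)).comp
        ((ContinuousLinearMap.id ℝ _).prod (ContinuousLinearMap.id ℝ _))) W :=
    (hasFDerivAt_id W).inner ℝ (hasFDerivAt_id W)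
  have hfun : (fun V : EuclideanSpace ℝ (Fin p × Fin d) => (lam / 2) * ‖V‖ ^ 2)
      = fun V => (lam / 2) * (inner ℝ V V : ℝ) := by
    funext V; rw [real_inner_self_eq_norm_sq]
  have hquad : HasFDerivAt (fun V : EuclideanSpace ℝ (Fin p × Fin d) => (lam / 2) * ‖V‖ ^ 2)
      ((lam / 2) • ((fderivInnerCLM ℝ (W, W)).comp
        ((ContinuousLinearMap.id ℝ _).prod (ContinuousLinearMap.id ℝ _)))) W := by
    rw [hfun]; exact hinner.const_mul (lam / 2)
  have hloss : HasFDerivAt (loss σ a x y) (fderiv ℝ (loss σ a x y) W) W :=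
    ((contDiff_loss hσ).differentiable (by simp) W).hasFDerivAt
  have hrisk : HasFDerivAt (risk σ a x y lam)
      (fderiv ℝ (loss σ a x y) W + (lam / 2) • ((fderivInnerCLM ℝ (W, W)).comp
        ((ContinuousLinearMap.id ℝ _).prod (ContinuousLinearMap.id ℝ _)))) W := by
    rw [risk_eq]; exact hloss.add hquad
  rw [hrisk.fderiv]
  simp only [ContinuousLinearMap.add_apply, ContinuousLinearMap.coe_smul',
    Pi.smul_apply, ContinuousLinearMap.coe_comp', Function.comp_apply,
    ContinuousLinearMap.prod_apply, ContinuousLinearMap.coe_id', id_eq,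
    fderivInnerCLM_apply, real_inner_self_eq_norm_sq, smul_eq_mul]
  ring

lemma grad_risk_lower (hσ : ContDiff ℝ (⊤ : ℕ∞) σ)
    (hLip : ∀ s t : ℝ, |σ s - σ t| ≤ L * |s - t|) (hL : 0 ≤ L)
    (hx : ∀ i, ‖x i‖ ≤ Bx) (hBx : 0 ≤ Bx) (hy : ∀ i, y i = 1 ∨ y i = -1)
    (W : EuclideanSpace ℝ (Fin p × Fin d)) (hW : 0 < ‖W‖) :
    lam * ‖W‖ - L * Bx * ∑ j, |a j| ≤ ‖gradient (risk σ a x y lam) W‖ := by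
  have hgn : ‖gradient (risk σ a x y lam) W‖ = ‖fderiv ℝ (risk σ a x y lam) W‖ := by
    rw [gradient]; exact LinearIsometryEquiv.norm_map _ _
  set C := L * Bx * ∑ j, |a j| with hC
  have h1 : fderiv ℝ (risk σ a x y lam) W W ≤ ‖fderiv ℝ (risk σ a x y lam) W‖ * ‖W‖ := by
    refine le_trans (le_abs_self _) ?_
    rw [← Real.norm_eq_abs]
    exact (fderiv ℝ (risk σ a x y lam) W).le_opNorm W
  have h2 : -(C * ‖W‖) ≤ fderiv ℝ (loss σ a x y) W W := by
    have habs : |fderiv ℝ (loss σ a x y) W W| ≤ C * ‖W‖ := by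
      rw [← Real.norm_eq_abs]
      exact le_trans ((fderiv ℝ (loss σ a x y) W).le_opNorm W)
        (mul_le_mul_of_nonneg_right (norm_fderiv_loss_le hLip hL hx hBx hy W) (norm_nonneg _))
    linarith [neg_abs_le (fderiv ℝ (loss σ a x y) W W)]
  have h3 := fderiv_risk_apply_self (a := a) (x := x) (y := y) (lam := lam) hσ W
  have h4 : (lam * ‖W‖ - C) * ‖W‖ ≤ ‖fderiv ℝ (risk σ a x y lam) W‖ * ‖W‖ := by
    nlinarith [sq_nonneg ‖W‖]
  rw [hgn]
  exact le_of_mul_le_mul_right h4 hW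

end VillaniAux
end GRAD
section LINE
namespace VillaniAux

lemma hasDerivAt_line {m : Type*} [Fintype m] (W e : EuclideanSpace ℝ m) (t : ℝ) :
    HasDerivAt (fun t : ℝ => W + t • e) e t := by
  simpa using ((hasDerivAt_id t).smul_const e).const_add W

lemma secondPartial_eq_line {m : Type*} [Fintype m] [DecidableEq m]
    (g : EuclideanSpace ℝ m → ℝ) (hg : ContDiff ℝ (⊤ : ℕ∞) g) (W : EuclideanSpace ℝ m) (q : m) :
    secondPartial g W q
      = deriv (deriv fun t : ℝ => g (W + t • EuclideanSpace.single q 1)) 0 := by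
  set e : EuclideanSpace ℝ m := EuclideanSpace.single q 1 with he
  have h1 : (deriv fun t : ℝ => g (W + t • e)) = fun t => fderiv ℝ g (W + t • e) e := by
    funext t
    exact (((hg.differentiable (by simp)) _).hasFDerivAt.comp_hasDerivAt t
      (hasDerivAt_line W e t)).deriv
  rw [h1]
  have hh : Differentiable ℝ (fun W' : EuclideanSpace ℝ m => fderiv ℝ g W' e) :=
    ((hg.fderiv_right (m := (⊤ : ℕ∞)) (by simp)).clm_apply contDiff_const).differentiable (by simp)
  have h2 : HasDerivAt (fun t : ℝ => fderiv ℝ g (W + t • e) e)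
      (fderiv ℝ (fun W' : EuclideanSpace ℝ m => fderiv ℝ g W' e) (W + (0:ℝ) • e) e) 0 :=
    (hh _).hasFDerivAt.comp_hasDerivAt 0 (hasDerivAt_line W e 0)
  rw [h2.deriv, secondPartial]
  norm_num
  rfl

end VillaniAux
end LINE
section SECOND
namespace VillaniAux

variable {p d n : ℕ} {σ : ℝ → ℝ} {a : EuclideanSpace ℝ (Fin p)}
  {x : Fin n → EuclideanSpace ℝ (Fin d)} {y : Fin n → ℝ} {lam L Bx M_D M_D' : ℝ}

lemma bound_helper1 {D c M B : ℝ} (hD : |D| ≤ M) (hc : |c| ≤ B) :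
    |D * c * c| ≤ M * B ^ 2 := by
  have hM0 : 0 ≤ M := le_trans (abs_nonneg _) hD
  have hB0 : 0 ≤ B := le_trans (abs_nonneg _) hc
  calc |D * c * c| = |D| * |c| * |c| := by rw [abs_mul, abs_mul]
    _ ≤ (M * B) * B := by
        have h1 : |D| * |c| ≤ M * B := mul_le_mul hD hc (abs_nonneg _) hM0
        exact mul_le_mul h1 hc (abs_nonneg _) (by positivity)
    _ = M * B ^ 2 := by ring

lemma bound_helper2 {X Y A B P Q : ℝ} (hX : |X| ≤ 1) (hY : |Y| ≤ 1)
    (hA : |A| ≤ P) (hB : |B| ≤ Q) : |X * A * A + Y * B| ≤ P ^ 2 + Q := by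
  have hP0 : 0 ≤ P := le_trans (abs_nonneg _) hA
  have hQ0 : 0 ≤ Q := le_trans (abs_nonneg _) hB
  calc |X * A * A + Y * B| ≤ |X * A * A| + |Y * B| := abs_add_le _ _
    _ = |X| * |A| * |A| + |Y| * |B| := by rw [abs_mul, abs_mul, abs_mul]
    _ ≤ 1 * P * P + 1 * Q := by
        have h1 : |X| * |A| ≤ 1 * P := mul_le_mul hX hA (abs_nonneg _) zero_le_one
        have h2 : |X| * |A| * |A| ≤ 1 * P * P :=
          mul_le_mul h1 hA (abs_nonneg _) (by positivity)
        have h3 : |Y| * |B| ≤ 1 * Q := mul_le_mul hY hB (abs_nonneg _) zero_le_one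
        linarith
    _ = P ^ 2 + Q := by ring

lemma secondPartial_risk_bound (hn : 0 < n) (hσ : ContDiff ℝ (⊤ : ℕ∞) σ)
    (hM : ∀ t : ℝ, |deriv σ t| ≤ M_D) (hM' : ∀ t : ℝ, |deriv (deriv σ) t| ≤ M_D')
    (hx : ∀ i, ‖x i‖ ≤ Bx) (hBx : 0 ≤ Bx) (hy : ∀ i, y i = 1 ∨ y i = -1)
    (W : EuclideanSpace ℝ (Fin p × Fin d)) (q : Fin p × Fin d) :
    |secondPartial (risk σ a x y lam) W q|
      ≤ ((∑ j, |a j|) * (M_D * Bx)) ^ 2 + (∑ j, |a j|) * (M_D' * Bx ^ 2) + |lam| := by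
  classical
  set e : EuclideanSpace ℝ (Fin p × Fin d) := EuclideanSpace.single q 1 with he
  set b : Fin n → Fin p → ℝ := fun i j' => (inner ℝ (row W j') (x i) : ℝ) with hb
  set c : Fin n → Fin p → ℝ := fun i j' => (inner ℝ (row e j') (x i) : ℝ) with hc
  have hde : ∀ u : ℝ, HasDerivAt σ (deriv σ u) u :=
    fun u => ((hσ.differentiable (by simp)) u).hasDerivAt
  have hσ' : Differentiable ℝ (deriv σ) := by
    have h := (contDiff_infty_iff_deriv.mp (hσ.of_le (by simp))).2
    exact h.differentiable (by simp)
  have hde' : ∀ u : ℝ, HasDerivAt (deriv σ) (deriv (deriv σ) u) u :=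
    fun u => (hσ' u).hasDerivAt
  have hbc : ∀ (B C t : ℝ), HasDerivAt (fun t : ℝ => B + t * C) C t := by
    intro B C t
    simpa using (hasDerivAt_mul_const C).const_add B
  -- the network along the line
  set N : Fin n → ℝ → ℝ := fun i t => ∑ j', a j' * σ (b i j' + t * c i j') with hN
  set N' : Fin n → ℝ → ℝ :=
    fun i t => ∑ j', a j' * (deriv σ (b i j' + t * c i j') * c i j') with hN'
  set v : Fin n → ℝ → ℝ := fun i t => -(y i) * N i t with hv
  set v' : Fin n → ℝ → ℝ := fun i t => -(y i) * N' i t with hv'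
  have hkey : ∀ (t : ℝ) (i : Fin n) (j' : Fin p),
      (inner ℝ (row (W + t • e) j') (x i) : ℝ) = b i j' + t * c i j' := by
    intro t i j'
    rw [row_add_smul, inner_add_left, real_inner_smul_left, hb, hc]
  have hNder : ∀ i t, HasDerivAt (N i) (N' i t) t := by
    intro i t
    refine HasDerivAt.fun_sum fun j' _ => ?_
    exact HasDerivAt.const_mul (a j')
      ((hde (b i j' + t * c i j')).comp t (hbc (b i j') (c i j') t))
  have hvder : ∀ i t, HasDerivAt (v i) (v' i t) t :=
    fun i t => HasDerivAt.const_mul (-(y i)) (hNder i t)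
  -- risk along the line
  have hNet : ∀ (t : ℝ) (i : Fin n), net σ a (W + t • e) (x i) = N i t := by
    intro t i
    rw [net, hN]
    exact Finset.sum_congr rfl fun j' _ => by rw [hkey t i j']
  have hnorm : ∀ t : ℝ, ‖W + t • e‖ ^ 2
      = ‖W‖ ^ 2 + 2 * (inner ℝ W e : ℝ) * t + t ^ 2 := by
    intro t
    rw [norm_add_sq_real, real_inner_smul_right, norm_smul, he,
      EuclideanSpace.norm_single]
    simp only [Real.norm_eq_abs, norm_one, mul_one, sq_abs]
    ring
  have hG : (fun t : ℝ => risk σ a x y lam (W + t • e))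
      = fun t => (1 / (n : ℝ)) * ∑ i, Lg (v i t)
        + (lam / 2) * (‖W‖ ^ 2 + 2 * (inner ℝ W e : ℝ) * t + t ^ 2) := by
    funext t
    simp only [risk, hNet, hnorm, Lg, hv]
  -- first derivative along the line
  set G1 : ℝ → ℝ := fun t => (1 / (n : ℝ)) * ∑ i, Lg' (v i t) * v' i t
    + (lam / 2) * (2 * (inner ℝ W e : ℝ) + 2 * t) with hG1def
  have hG1 : ∀ t, HasDerivAt (fun t => (1 / (n : ℝ)) * ∑ i, Lg (v i t)
      + (lam / 2) * (‖W‖ ^ 2 + 2 * (inner ℝ W e : ℝ) * t + t ^ 2)) (G1 t) t := by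
    intro t
    apply HasDerivAt.add
    · exact HasDerivAt.const_mul _
        (HasDerivAt.fun_sum fun i _ => (hasDerivAt_Lg (v i t)).comp t (hvder i t))
    · apply HasDerivAt.const_mul
      have h1 : HasDerivAt (fun t : ℝ => 2 * (inner ℝ W e : ℝ) * t)
          (2 * (inner ℝ W e : ℝ)) t := by
        simpa using (hasDerivAt_id t).const_mul (2 * (inner ℝ W e : ℝ))
      have h2 : HasDerivAt (fun t : ℝ => t ^ 2) (2 * t) t := by
        simpa using hasDerivAt_pow 2 t
      exact (h1.const_add _).add h2
  have hderiv1 : deriv (fun t : ℝ => risk σ a x y lam (W + t • e)) = G1 := by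
    rw [hG]; funext t; exact (hG1 t).deriv
  -- second derivative at 0
  set Bv : Fin n → ℝ :=
    fun i => -(y i) * ∑ j', a j' * (deriv (deriv σ) (b i j' + 0 * c i j') * c i j' * c i j')
    with hBv
  have hN'der : ∀ i, HasDerivAt (fun t => v' i t) (Bv i) 0 := by
    intro i
    refine HasDerivAt.const_mul (-(y i)) (HasDerivAt.fun_sum fun j' _ => ?_)
    have hcomp := (hde' (b i j' + 0 * c i j')).comp (0:ℝ) (hbc (b i j') (c i j') 0)
    exact HasDerivAt.const_mul (a j') (hcomp.mul_const (c i j'))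
  set D2 : ℝ := (1 / (n : ℝ)) * ∑ i, ((Lg'' (v i 0) * v' i 0) * v' i 0 + Lg' (v i 0) * Bv i)
    + (lam / 2) * 2 with hD2
  have hG2 : HasDerivAt G1 D2 0 := by
    apply HasDerivAt.add
    · refine HasDerivAt.const_mul _ (HasDerivAt.fun_sum fun i _ => ?_)
      exact ((hasDerivAt_Lg' (v i 0)).comp 0 (hvder i 0)).mul (hN'der i)
    · apply HasDerivAt.const_mul
      have h1 : HasDerivAt (fun t : ℝ => 2 * t) 2 0 := by
        simpa using (hasDerivAt_id (0:ℝ)).const_mul 2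
      simpa using h1.const_add (2 * (inner ℝ W e : ℝ))
  -- identification
  have hsp : secondPartial (risk σ a x y lam) W q = D2 := by
    rw [secondPartial_eq_line (risk σ a x y lam) (contDiff_risk hσ) W q, ← he,
      hderiv1, hG2.deriv]
  rw [hsp]
  -- bounds
  have habs_y : ∀ i, |y i| = 1 := by
    intro i; rcases hy i with h | h <;> rw [h] <;> norm_num
  have hMD0 : 0 ≤ M_D := le_trans (abs_nonneg _) (hM 0)
  have hMD'0 : 0 ≤ M_D' := le_trans (abs_nonneg _) (hM' 0)
  have hcB : ∀ i j', |c i j'| ≤ Bx := by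
    intro i j'
    refine le_trans (abs_inner_row_le e j' (x i)) ?_
    rw [he, EuclideanSpace.norm_single]
    simpa using hx i
  set P : ℝ := (∑ j, |a j|) * (M_D * Bx) with hP
  set Q : ℝ := (∑ j, |a j|) * (M_D' * Bx ^ 2) with hQ
  have hP0 : 0 ≤ P := by
    apply mul_nonneg (Finset.sum_nonneg fun j _ => abs_nonneg _); positivity
  have hQ0 : 0 ≤ Q := by
    apply mul_nonneg (Finset.sum_nonneg fun j _ => abs_nonneg _); positivity
  have hv'B : ∀ i, |v' i 0| ≤ P := by
    intro i
    rw [hv']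
    simp only [abs_mul, abs_neg, habs_y i, one_mul]
    refine le_trans (Finset.abs_sum_le_sum_abs _ _) ?_
    rw [hP, Finset.sum_mul]
    refine Finset.sum_le_sum fun j' _ => ?_
    rw [abs_mul]
    refine mul_le_mul_of_nonneg_left ?_ (abs_nonneg _)
    rw [abs_mul]
    exact mul_le_mul (hM _) (hcB i j') (abs_nonneg _) hMD0
  have hBvB : ∀ i, |Bv i| ≤ Q := by
    intro i
    rw [hBv]
    simp only [abs_mul, abs_neg, habs_y i, one_mul]
    refine le_trans (Finset.abs_sum_le_sum_abs _ _) ?_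
    rw [hQ, Finset.sum_mul]
    refine Finset.sum_le_sum fun j' _ => ?_
    rw [abs_mul]
    refine mul_le_mul_of_nonneg_left ?_ (abs_nonneg _)
    exact bound_helper1 (hM' _) (hcB i j')
  have hterm : ∀ i, |(Lg'' (v i 0) * v' i 0) * v' i 0 + Lg' (v i 0) * Bv i|
      ≤ P ^ 2 + Q := by
    intro i
    exact bound_helper2 (Lg''_abs_le _) (Lg'_abs_le _) (hv'B i) (hBvB i)
  have hsum : |(1 / (n : ℝ)) * ∑ i, ((Lg'' (v i 0) * v' i 0) * v' i 0 + Lg' (v i 0) * Bv i)|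
      ≤ P ^ 2 + Q := by
    rw [abs_mul]
    have h0 : |(1 : ℝ) / (n : ℝ)| = 1 / (n : ℝ) := abs_of_nonneg (by positivity)
    rw [h0]
    have h1 : |∑ i, ((Lg'' (v i 0) * v' i 0) * v' i 0 + Lg' (v i 0) * Bv i)|
        ≤ (n : ℝ) * (P ^ 2 + Q) := by
      refine le_trans (Finset.abs_sum_le_sum_abs _ _) ?_
      refine le_trans (Finset.sum_le_sum fun i _ => hterm i) ?_
      rw [Finset.sum_const, Finset.card_univ, Fintype.card_fin, nsmul_eq_mul]
    have hn' : (0:ℝ) < (n : ℝ) := by exact_mod_cast hn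
    calc (1 / (n : ℝ)) * |∑ i, ((Lg'' (v i 0) * v' i 0) * v' i 0 + Lg' (v i 0) * Bv i)|
        ≤ (1 / (n : ℝ)) * ((n : ℝ) * (P ^ 2 + Q)) :=
          mul_le_mul_of_nonneg_left h1 (by positivity)
      _ = P ^ 2 + Q := by field_simp
  calc |D2| ≤ |(1 / (n : ℝ)) * ∑ i, ((Lg'' (v i 0) * v' i 0) * v' i 0 + Lg' (v i 0) * Bv i)|
        + |(lam / 2) * 2| := by rw [hD2]; exact abs_add_le _ _
    _ ≤ (P ^ 2 + Q) + |lam| := by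
        have : (lam / 2) * 2 = lam := by ring
        rw [this]
        exact add_le_add_left hsum _
    _ = P ^ 2 + Q + |lam| := by ring

end VillaniAux
end SECOND
section FINAL
namespace VillaniAux

variable {p d n : ℕ} {σ : ℝ → ℝ} {a : EuclideanSpace ℝ (Fin p)}
  {x : Fin n → EuclideanSpace ℝ (Fin d)} {y : Fin n → ℝ} {lam L Bx M_D M_D' : ℝ}

lemma risk_ge (W : EuclideanSpace ℝ (Fin p × Fin d)) :
    (lam / 2) * ‖W‖ ^ 2 ≤ risk σ a x y lam W := by
  have h : 0 ≤ loss σ a x y W := by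
    apply mul_nonneg (by positivity)
    exact Finset.sum_nonneg fun i _ => Lg_nonneg _
  have : risk σ a x y lam W = loss σ a x y W + (lam / 2) * ‖W‖ ^ 2 := rfl
  linarith

lemma lap_risk_bound (hn : 0 < n) (hσ : ContDiff ℝ (⊤ : ℕ∞) σ)
    (hM : ∀ t : ℝ, |deriv σ t| ≤ M_D) (hM' : ∀ t : ℝ, |deriv (deriv σ) t| ≤ M_D')
    (hx : ∀ i, ‖x i‖ ≤ Bx) (hBx : 0 ≤ Bx) (hy : ∀ i, y i = 1 ∨ y i = -1)
    (W : EuclideanSpace ℝ (Fin p × Fin d)) :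
    |lap (risk σ a x y lam) W| ≤ (Fintype.card (Fin p × Fin d) : ℝ) *
      (((∑ j, |a j|) * (M_D * Bx)) ^ 2 + (∑ j, |a j|) * (M_D' * Bx ^ 2) + |lam|) := by
  rw [lap]
  refine le_trans (Finset.abs_sum_le_sum_abs _ _) ?_
  refine le_trans (Finset.sum_le_sum fun q _ =>
    secondPartial_risk_bound hn hσ hM hM' hx hBx hy W q) ?_
  rw [Finset.sum_const, Finset.card_univ, nsmul_eq_mul]

lemma integrable_gauss {m : Type*} [Fintype m] {bp : ℝ} (hb : 0 < bp) :
    Integrable (fun W : EuclideanSpace ℝ m => Real.exp (-bp * ‖W‖ ^ 2)) := by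
  have h := (GaussianFourier.integrable_cexp_neg_mul_sq_norm_add
    (V := EuclideanSpace ℝ m) (b := (bp : ℂ)) (by simpa using hb) 0 0).norm
  refine h.congr (Filter.Eventually.of_forall fun v => ?_)
  simp [Complex.norm_exp]
  left
  norm_cast

end VillaniAux
end FINAL


/-- If `λ > M_D L B_x² ‖a‖²/2`, then the regularized logistic empirical risk is a Villani
function: it is `C^∞`, coercive, `exp(−2L̃/s)` is integrable for every `s > 0`, and
`−ΔL̃(W) + (1/s)‖∇L̃(W)‖² → +∞` as `‖W‖_F → ∞` for every `s > 0` — with no assumption on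
the width `p` or on the data beyond `‖xᵢ‖₂ ≤ B_x`. -/
theorem risk_is_villani {p d n : ℕ} (hn : 0 < n) (σ : ℝ → ℝ)
    (M_D M_D' L Bx lam : ℝ)
    (hσ : ContDiff ℝ (⊤ : ℕ∞) σ) (hM : ∀ t : ℝ, |deriv σ t| ≤ M_D)
    (hM' : ∀ t : ℝ, |deriv (deriv σ) t| ≤ M_D')
    (hLip : ∀ s t : ℝ, |σ s - σ t| ≤ L * |s - t|) (hL : 0 ≤ L)
    (a : EuclideanSpace ℝ (Fin p))
    (x : Fin n → EuclideanSpace ℝ (Fin d)) (y : Fin n → ℝ)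
    (hx : ∀ i, ‖x i‖ ≤ Bx) (hBx : 0 ≤ Bx) (hy : ∀ i, y i = 1 ∨ y i = -1)
    (hlam : lam > M_D * L * Bx ^ 2 * ‖a‖ ^ 2 / 2) :
    ContDiff ℝ (⊤ : ℕ∞) (risk σ a x y lam) ∧
    Filter.Tendsto (risk σ a x y lam) (Filter.comap norm Filter.atTop) Filter.atTop ∧
    (∀ s : ℝ, 0 < s →
      MeasureTheory.Integrable
        (fun W : EuclideanSpace ℝ (Fin p × Fin d) =>
          Real.exp (-2 * risk σ a x y lam W / s))
        MeasureTheory.volume) ∧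
    (∀ s : ℝ, 0 < s →
      Filter.Tendsto
        (fun W : EuclideanSpace ℝ (Fin p × Fin d) =>
          -lap (risk σ a x y lam) W + (1 / s) * ‖gradient (risk σ a x y lam) W‖ ^ 2)
        (Filter.comap norm Filter.atTop) Filter.atTop) := by
  classical
  have hMD0 : 0 ≤ M_D := le_trans (abs_nonneg _) (hM 0)
  have hlam0 : 0 < lam := lt_of_le_of_lt (by positivity) hlam
  set C : ℝ := L * Bx * ∑ j, |a j| with hCdef
  have hS : 0 ≤ ∑ j, |a j| := Finset.sum_nonneg fun j _ => abs_nonneg _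
  have hC0 : 0 ≤ C := by rw [hCdef]; positivity
  refine ⟨VillaniAux.contDiff_risk hσ, ?_, ?_, ?_⟩
  · -- coercivity
    have htend : Tendsto (fun r : ℝ => (lam / 2) * r ^ 2) atTop atTop :=
      (tendsto_pow_atTop two_ne_zero).const_mul_atTop (by positivity)
    exact tendsto_atTop_mono'
      _ (Filter.Eventually.of_forall fun W => VillaniAux.risk_ge W)
      (htend.comp tendsto_comap)
  · -- integrability
    intro s hs
    have hint := VillaniAux.integrable_gauss (m := Fin p × Fin d)
      (show (0:ℝ) < lam / s by positivity)
    refine hint.mono' ?_ ?_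
    · have hc : Continuous (risk σ a x y lam) := (VillaniAux.contDiff_risk hσ).continuous
      exact (Real.continuous_exp.comp
        ((continuous_const.mul hc).div_const s)).aestronglyMeasurable
    · refine Filter.Eventually.of_forall fun W => ?_
      rw [Real.norm_eq_abs, abs_of_nonneg (Real.exp_nonneg _), Real.exp_le_exp]
      have h1 := VillaniAux.risk_ge (σ := σ) (a := a) (x := x) (y := y) (lam := lam) W
      rw [div_le_iff₀ hs]
      have h2 : -(lam / s) * ‖W‖ ^ 2 * s = -lam * ‖W‖ ^ 2 := by field_simp
      rw [h2]
      linarith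
  · -- Laplacian / gradient condition
    intro s hs
    set K : ℝ := (Fintype.card (Fin p × Fin d) : ℝ) *
      (((∑ j, |a j|) * (M_D * Bx)) ^ 2 + (∑ j, |a j|) * (M_D' * Bx ^ 2) + |lam|) with hK
    have hφt : Tendsto (fun r : ℝ => -K + (1 / s) * (lam * r - C) ^ 2) atTop atTop := by
      have h1 : Tendsto (fun r : ℝ => lam * r - C) atTop atTop := by
        have := tendsto_atTop_add_const_right atTop (-C)
          (tendsto_id.const_mul_atTop hlam0)
        simpa [sub_eq_add_neg] using this
      have h2 : Tendsto (fun r : ℝ => (lam * r - C) ^ 2) atTop atTop :=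
        (tendsto_pow_atTop two_ne_zero).comp h1
      have h3 : Tendsto (fun r : ℝ => (1 / s) * (lam * r - C) ^ 2) atTop atTop :=
        h2.const_mul_atTop (by positivity)
      exact tendsto_atTop_add_const_left _ (-K) h3
    have hlow : ∀ W : EuclideanSpace ℝ (Fin p × Fin d), max 1 (C / lam) ≤ ‖W‖ →
        -K + (1 / s) * (lam * ‖W‖ - C) ^ 2
          ≤ -lap (risk σ a x y lam) W + (1 / s) * ‖gradient (risk σ a x y lam) W‖ ^ 2 := by
      intro W hW
      have hW1 : 0 < ‖W‖ := lt_of_lt_of_le zero_lt_one (le_trans (le_max_left _ _) hW)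
      have hg := VillaniAux.grad_risk_lower (a := a) (lam := lam) hσ hLip hL hx hBx hy W hW1
      have hge0 : 0 ≤ lam * ‖W‖ - C := by
        have h4 : C / lam ≤ ‖W‖ := le_trans (le_max_right _ _) hW
        have h5 := (div_le_iff₀ hlam0).mp h4
        nlinarith
      have hsq : (lam * ‖W‖ - C) ^ 2 ≤ ‖gradient (risk σ a x y lam) W‖ ^ 2 :=
        pow_le_pow_left₀ hge0 hg 2
      have hl := VillaniAux.lap_risk_bound (a := a) (lam := lam) hn hσ hM hM' hx hBx hy W
      have h6 : lap (risk σ a x y lam) W ≤ K := le_trans (le_abs_self _) hl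
      have h7 : (1 / s) * (lam * ‖W‖ - C) ^ 2
          ≤ (1 / s) * ‖gradient (risk σ a x y lam) W‖ ^ 2 :=
        mul_le_mul_of_nonneg_left hsq (by positivity)
      linarith
    refine tendsto_atTop_mono' _ ?_ (hφt.comp tendsto_comap)
    filter_upwards [tendsto_comap.eventually_ge_atTop (max 1 (C / lam))] with W hW
    exact hlow W hW
end

section
/- Under the stated assumptions on σ and the data, for every j ∈ {1,…,p}, every data index i, and the map h : ℝ^{p×d} → ℝ given by h(W) = ℓ′(y_i f(x_i; a, W))·σ′(⟨w_j, x_i⟩) (where ℓ′(z) = −1/(1+e^z)), the gradient of h at any W has Frobenius norm at most √p·( ‖a‖₂·M_D²·B_x/4 + ((2 + ‖c‖₂ + ‖a‖₂·B_σ)/4)·M_D′·B_x·√p ); consequently h is Lipschitz with this constant. -/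
open MeasureTheory Real Filter

section AuxLemmasPTL

private lemma ptl_phi_deriv_bound (z : ℝ) : Real.exp z / (1 + Real.exp z)^2 ≤ 1/4 := by
  have h := Real.exp_pos z
  rw [div_le_iff₀ (by positivity)]
  nlinarith [sq_nonneg (1 - Real.exp z)]

private lemma ptl_logistic_bound (z : ℝ) : 1 / (1 + Real.exp z) ≤ (2 + |z|)/4 := by
  have h := Real.exp_pos z
  rcases le_or_gt 0 z with hz | hz
  · have h1 : (1:ℝ) ≤ Real.exp z := Real.one_le_exp hz
    rw [abs_of_nonneg hz, div_le_div_iff₀ (by positivity) (by norm_num)]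
    nlinarith
  · rw [abs_of_neg hz]
    have key : 4 ≤ (2 - z) * (1 + Real.exp z) := by
      have hanti : AntitoneOn (fun z : ℝ => (2 - z) * (1 + Real.exp z)) (Set.Iic 0) := by
        have hd : ∀ x : ℝ, HasDerivAt (fun z : ℝ => (2 - z) * (1 + Real.exp z))
            ((-1) * (1 + Real.exp x) + (2 - x) * Real.exp x) x := fun x =>
          (((hasDerivAt_id x).const_sub 2).mul ((Real.hasDerivAt_exp x).const_add 1))
        apply antitoneOn_of_deriv_nonpos (convex_Iic 0)
        · exact (Continuous.mul (by continuity) (by continuity)).continuousOn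
        · intro x _; exact (hd x).differentiableAt.differentiableWithinAt
        · intro x _
          rw [(hd x).deriv]
          have h2 := mul_le_mul_of_nonneg_right (Real.add_one_le_exp (-x)) (Real.exp_pos x).le
          rw [← Real.exp_add] at h2
          simp at h2
          nlinarith [Real.exp_pos x]
      have := hanti (Set.mem_Iic.2 hz.le) (Set.mem_Iic.2 le_rfl) hz.le
      norm_num at this
      linarith
    rw [div_le_div_iff₀ (by positivity) (by norm_num)]
    nlinarith

private lemma ptl_sum_abs_le {p : ℕ} (a : EuclideanSpace ℝ (Fin p)) :
    ∑ l, |a l| ≤ Real.sqrt p * ‖a‖ := by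
  have h1 : (∑ l, |a l|)^2 ≤ (p : ℝ) * ∑ l, |a l|^2 := by
    have := sq_sum_le_card_mul_sum_sq (s := (Finset.univ : Finset (Fin p))) (f := fun l => |a l|)
    simpa using this
  have h2 : ‖a‖ = Real.sqrt (∑ l, |a l|^2) := by
    rw [EuclideanSpace.norm_eq]; simp [Real.norm_eq_abs]
  rw [h2, ← Real.sqrt_mul (by positivity)]
  exact (Real.le_sqrt (by positivity) (by positivity)).mpr h1

/-- The matrix with `l`-th row `xi` and all other rows zero. -/
private def Xr {p d : ℕ} (xi : EuclideanSpace ℝ (Fin d)) (l : Fin p) :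
    EuclideanSpace ℝ (Fin p × Fin d) :=
  WithLp.toLp 2 (fun q : Fin p × Fin d => if q.1 = l then xi q.2 else 0)

private lemma ptl_ipX {p d : ℕ} (xi : EuclideanSpace ℝ (Fin d)) (l : Fin p)
    (W : EuclideanSpace ℝ (Fin p × Fin d)) :
    (inner ℝ (row W l) xi : ℝ) = (inner ℝ (Xr xi l) W : ℝ) := by
  simp only [PiLp.inner_apply, RCLike.inner_apply, conj_trivial, row, Xr, PiLp.toLp_apply]
  rw [Fintype.sum_prod_type, Finset.sum_eq_single l]
  · simp [mul_comm]
  · intro b _ hb; simp [hb]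
  · simp

private lemma ptl_Xnorm {p d : ℕ} (xi : EuclideanSpace ℝ (Fin d)) (l : Fin p) :
    ‖Xr xi l‖ = ‖xi‖ := by
  rw [EuclideanSpace.norm_eq, EuclideanSpace.norm_eq]
  congr 1
  rw [Fintype.sum_prod_type, Finset.sum_eq_single l]
  · simp [Xr]
  · intro b _ hb; simp [Xr, hb]
  · simp

end AuxLemmasPTL

set_option maxHeartbeats 1000000
set_option synthInstance.maxHeartbeats 400000

/-- For the map `h(W) = ℓ'(yᵢ f(xᵢ; a, W)) σ'(⟨wⱼ, xᵢ⟩)` with `ℓ'(z) = −1/(1+e^z)`,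
the gradient of `h` has Frobenius norm at most
`√p (‖a‖ M_D² B_x/4 + ((2 + ‖c‖ + ‖a‖ B_σ)/4) M_D' B_x √p)` at every `W`; consequently
`h` is Lipschitz with this constant. Here `‖c‖ = √p |c₀|`. -/
theorem product_term_lipschitz {p d : ℕ} (σ : ℝ → ℝ)
    (M_D M_D' Bσ c₀ Bx : ℝ)
    (hσ : ContDiff ℝ 2 σ) (hB : ∀ t : ℝ, |σ t| ≤ Bσ)
    (hM : ∀ t : ℝ, |deriv σ t| ≤ M_D)
    (hM' : ∀ t : ℝ, |deriv (deriv σ) t| ≤ M_D') (hσ0 : σ 0 = c₀)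
    (a : EuclideanSpace ℝ (Fin p))
    (xi : EuclideanSpace ℝ (Fin d)) (yi : ℝ)
    (hxi : ‖xi‖ ≤ Bx) (hBx : 0 ≤ Bx) (hyi : yi = 1 ∨ yi = -1) (j : Fin p) :
    (∀ W : EuclideanSpace ℝ (Fin p × Fin d),
      ‖gradient
          (fun W' : EuclideanSpace ℝ (Fin p × Fin d) =>
            -(1 / (1 + Real.exp (yi * net σ a W' xi))) *
              deriv σ (inner ℝ (row W' j) xi : ℝ)) W‖ ≤
        Real.sqrt p * (‖a‖ * M_D ^ 2 * Bx / 4 +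
          ((2 + Real.sqrt p * |c₀| + ‖a‖ * Bσ) / 4) * M_D' * Bx * Real.sqrt p)) ∧
    (∀ W₁ W₂ : EuclideanSpace ℝ (Fin p × Fin d),
      |(-(1 / (1 + Real.exp (yi * net σ a W₁ xi))) * deriv σ (inner ℝ (row W₁ j) xi : ℝ)) -
        (-(1 / (1 + Real.exp (yi * net σ a W₂ xi))) * deriv σ (inner ℝ (row W₂ j) xi : ℝ))| ≤
        Real.sqrt p * (‖a‖ * M_D ^ 2 * Bx / 4 +
            ((2 + Real.sqrt p * |c₀| + ‖a‖ * Bσ) / 4) * M_D' * Bx * Real.sqrt p) *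
          ‖W₁ - W₂‖) := by
  classical
  set s : ℝ := Real.sqrt p with hs
  set C : ℝ := s * (‖a‖ * M_D ^ 2 * Bx / 4 +
      ((2 + s * |c₀| + ‖a‖ * Bσ) / 4) * M_D' * Bx * s) with hCdef
  set C0 : ℝ := s * ‖a‖ * M_D ^ 2 * Bx / 4 + (2 + s * ‖a‖ * Bσ) / 4 * (M_D' * Bx) with hC0def
  have hMD : 0 ≤ M_D := le_trans (abs_nonneg _) (hM 0)
  have hMD' : 0 ≤ M_D' := le_trans (abs_nonneg _) (hM' 0)
  have hBσ : 0 ≤ Bσ := le_trans (abs_nonneg _) (hB 0)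
  have hna : 0 ≤ ‖a‖ := norm_nonneg a
  have hyiabs : |yi| = 1 := by rcases hyi with h | h <;> simp [h]
  have hp1 : (1:ℝ) ≤ s := by
    rw [hs, show (1:ℝ) = Real.sqrt 1 by simp]
    exact Real.sqrt_le_sqrt (by exact_mod_cast j.pos)
  have hσd : Differentiable ℝ σ := hσ.differentiable (by norm_num)
  have hσd' : Differentiable ℝ (deriv σ) := by
    have h2 : ContDiff ℝ ((1:ℕ) + 1) σ := by exact_mod_cast hσ
    exact ((contDiff_succ_iff_deriv.mp h2).2.2).differentiable (by norm_num)
  set h : EuclideanSpace ℝ (Fin p × Fin d) → ℝ := fun W' =>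
    -(1 / (1 + Real.exp (yi * net σ a W' xi))) * deriv σ (inner ℝ (row W' j) xi : ℝ) with hhdef
  have hfun : h = fun W' =>
      -(1 / (1 + Real.exp (yi * ∑ l, a l * σ (inner ℝ (Xr xi l) W' : ℝ)))) *
        deriv σ (inner ℝ (Xr xi j) W' : ℝ) := by
    funext W'
    simp only [hhdef, net, ptl_ipX]
  set DN : EuclideanSpace ℝ (Fin p × Fin d) → (EuclideanSpace ℝ (Fin p × Fin d) →L[ℝ] ℝ) :=
    fun W => ∑ l, (a l * deriv σ (inner ℝ (Xr xi l) W : ℝ)) • (innerSL ℝ (Xr xi l)) with hDNdef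
  set L : EuclideanSpace ℝ (Fin p × Fin d) → ℝ :=
    fun W => yi * ∑ l, a l * σ (inner ℝ (Xr xi l) W : ℝ) with hLdef
  set D : EuclideanSpace ℝ (Fin p × Fin d) → (EuclideanSpace ℝ (Fin p × Fin d) →L[ℝ] ℝ) :=
    fun W =>
    (-(1 / (1 + Real.exp (L W)))) •
        ((deriv (deriv σ) (inner ℝ (Xr xi j) W : ℝ)) • (innerSL ℝ (Xr xi j)))
      + (deriv σ (inner ℝ (Xr xi j) W : ℝ)) •
        ((Real.exp (L W) / (1 + Real.exp (L W))^2) • (yi • DN W)) with hDdef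
  have hphi : ∀ z : ℝ, HasDerivAt (fun z : ℝ => -(1/(1 + Real.exp z)))
      (Real.exp z / (1 + Real.exp z)^2) z := by
    intro z
    have h0 : 1 + Real.exp z ≠ 0 := by positivity
    have h1 : HasDerivAt (fun z : ℝ => 1 + Real.exp z) (Real.exp z) z :=
      (Real.hasDerivAt_exp z).const_add 1
    have h2 := (h1.inv h0).fun_neg
    simpa [one_div, neg_div] using h2
  have hDer : ∀ W, HasFDerivAt h (D W) W := by
    intro W
    rw [hfun]
    have hipl : ∀ l : Fin p, HasFDerivAt
        (fun W' : EuclideanSpace ℝ (Fin p × Fin d) => (inner ℝ (Xr xi l) W' : ℝ))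
        (innerSL ℝ (Xr xi l)) W := fun l => (innerSL ℝ (Xr xi l)).hasFDerivAt
    have hnet : HasFDerivAt
        (fun W' : EuclideanSpace ℝ (Fin p × Fin d) => ∑ l, a l * σ (inner ℝ (Xr xi l) W' : ℝ))
        (DN W) W := by
      rw [hDNdef]
      apply HasFDerivAt.fun_sum
      intro l _
      have := ((hσd _).hasDerivAt.comp_hasFDerivAt W (hipl l)).const_mul (a l)
      simpa [smul_smul, Function.comp_def] using this
    have hL : HasFDerivAt L (yi • DN W) W := hnet.const_mul yi
    have hΦ : HasFDerivAt (fun W' => -(1 / (1 + Real.exp (L W'))))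
        ((Real.exp (L W) / (1 + Real.exp (L W))^2) • (yi • DN W)) W :=
      (hphi (L W)).comp_hasFDerivAt W hL
    have hΨ : HasFDerivAt
        (fun W' : EuclideanSpace ℝ (Fin p × Fin d) => deriv σ (inner ℝ (Xr xi j) W' : ℝ))
        ((deriv (deriv σ) (inner ℝ (Xr xi j) W : ℝ)) • (innerSL ℝ (Xr xi j))) W :=
      (hσd' _).hasDerivAt.comp_hasFDerivAt W (hipl j)
    exact hΦ.mul hΨ
  have hsum_abs := ptl_sum_abs_le a
  have hDbound : ∀ W, ‖D W‖ ≤ C0 := by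
    intro W
    have hXn : ∀ l : Fin p, ‖innerSL ℝ (Xr xi l)‖ ≤ Bx := by
      intro l; rw [innerSL_apply_norm, ptl_Xnorm]; exact hxi
    have hDN : ‖DN W‖ ≤ s * ‖a‖ * (M_D * Bx) := by
      rw [hDNdef]
      refine le_trans (norm_sum_le _ _) ?_
      have hterm : ∀ l : Fin p,
          ‖(a l * deriv σ (inner ℝ (Xr xi l) W : ℝ)) • (innerSL ℝ (Xr xi l))‖
          ≤ |a l| * (M_D * Bx) := by
        intro l
        rw [norm_smul (a l * deriv σ (inner ℝ (Xr xi l) W : ℝ)) (innerSL ℝ (Xr xi l)),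
          Real.norm_eq_abs, abs_mul]
        calc |a l| * |deriv σ (inner ℝ (Xr xi l) W : ℝ)| * ‖innerSL ℝ (Xr xi l)‖
            ≤ |a l| * M_D * Bx :=
              mul_le_mul (mul_le_mul_of_nonneg_left (hM _) (abs_nonneg _)) (hXn l)
                (norm_nonneg _) (by positivity)
          _ = |a l| * (M_D * Bx) := by ring
      refine le_trans (Finset.sum_le_sum (fun l _ => hterm l)) ?_
      rw [← Finset.sum_mul]
      exact mul_le_mul_of_nonneg_right hsum_abs (by positivity)
    have hLabs : |L W| ≤ s * ‖a‖ * Bσ := by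
      rw [hLdef, abs_mul, hyiabs, one_mul]
      calc |∑ l, a l * σ (inner ℝ (Xr xi l) W : ℝ)|
          ≤ ∑ l, |a l * σ (inner ℝ (Xr xi l) W : ℝ)| := Finset.abs_sum_le_sum_abs _ _
        _ ≤ ∑ l, |a l| * Bσ := by
            refine Finset.sum_le_sum fun l _ => ?_
            rw [abs_mul]
            exact mul_le_mul_of_nonneg_left (hB _) (abs_nonneg _)
        _ = (∑ l, |a l|) * Bσ := by rw [← Finset.sum_mul]
        _ ≤ s * ‖a‖ * Bσ := mul_le_mul_of_nonneg_right hsum_abs hBσ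
    have hΦabs : |(-(1 / (1 + Real.exp (L W))))| ≤ (2 + s * ‖a‖ * Bσ) / 4 := by
      rw [abs_neg, abs_of_nonneg (by positivity)]
      refine le_trans (ptl_logistic_bound (L W)) ?_
      linarith
    have t1 : ‖(-(1 / (1 + Real.exp (L W)))) •
        ((deriv (deriv σ) (inner ℝ (Xr xi j) W : ℝ)) • (innerSL ℝ (Xr xi j)))‖
        ≤ (2 + s * ‖a‖ * Bσ) / 4 * (M_D' * Bx) := by
      rw [norm_smul (-(1 / (1 + Real.exp (L W))))
          ((deriv (deriv σ) (inner ℝ (Xr xi j) W : ℝ)) • (innerSL ℝ (Xr xi j))),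
        norm_smul (deriv (deriv σ) (inner ℝ (Xr xi j) W : ℝ)) (innerSL ℝ (Xr xi j)),
        Real.norm_eq_abs, Real.norm_eq_abs]
      apply mul_le_mul hΦabs _ (by positivity) (by positivity)
      exact mul_le_mul (hM' _) (hXn j) (norm_nonneg _) hMD'
    have t2 : ‖(deriv σ (inner ℝ (Xr xi j) W : ℝ)) •
        ((Real.exp (L W) / (1 + Real.exp (L W))^2) • (yi • DN W))‖
        ≤ s * ‖a‖ * M_D ^ 2 * Bx / 4 := by
      rw [norm_smul (deriv σ (inner ℝ (Xr xi j) W : ℝ))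
          ((Real.exp (L W) / (1 + Real.exp (L W))^2) • (yi • DN W)),
        norm_smul (Real.exp (L W) / (1 + Real.exp (L W))^2) (yi • DN W),
        norm_smul yi (DN W), Real.norm_eq_abs, Real.norm_eq_abs,
        Real.norm_eq_abs, hyiabs, one_mul,
        abs_of_nonneg (show (0:ℝ) ≤ Real.exp (L W) / (1 + Real.exp (L W))^2 by positivity)]
      calc |deriv σ (inner ℝ (Xr xi j) W : ℝ)| *
            (Real.exp (L W) / (1 + Real.exp (L W))^2 * ‖DN W‖)
          ≤ M_D * (1/4 * (s * ‖a‖ * (M_D * Bx))) := by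
            apply mul_le_mul (hM _) _ (by positivity) hMD
            exact mul_le_mul (ptl_phi_deriv_bound _) hDN (norm_nonneg _) (by norm_num)
        _ = s * ‖a‖ * M_D ^ 2 * Bx / 4 := by ring
    rw [hDdef, hC0def]
    exact le_trans (norm_add_le _ _) (by linarith)
  have hC0C : C0 ≤ C := by
    have hA : (0:ℝ) ≤ M_D' * Bx := mul_nonneg hMD' hBx
    have hs1 : (1:ℝ) ≤ s * s := by nlinarith [hp1, sq_nonneg (s-1)]
    have g1 : (0:ℝ) ≤ (M_D' * Bx) * (s * s - 1) := mul_nonneg hA (by linarith)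
    have g2 : (0:ℝ) ≤ (M_D' * Bx) * ((s * s - s) * (‖a‖ * Bσ)) := by
      have : (0:ℝ) ≤ s * s - s := by nlinarith
      positivity
    have g3 : (0:ℝ) ≤ (M_D' * Bx) * (s * s * (s * |c₀|)) := by positivity
    rw [hC0def, hCdef]
    nlinarith [g1, g2, g3]
  constructor
  · intro W
    have hgrad : ‖gradient h W‖ = ‖fderiv ℝ h W‖ := by
      unfold gradient
      exact LinearIsometryEquiv.norm_map _ _
    calc ‖gradient h W‖ = ‖fderiv ℝ h W‖ := hgrad
      _ = ‖D W‖ := by rw [(hDer W).fderiv]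
      _ ≤ C0 := hDbound W
      _ ≤ C := hC0C
  · intro W₁ W₂
    have hlip := Convex.norm_image_sub_le_of_norm_fderiv_le
      (f := h) (C := C) (s := Set.univ)
      (fun x _ => (hDer x).differentiableAt)
      (fun x _ => by rw [(hDer x).fderiv]; exact le_trans (hDbound x) hC0C)
      convex_univ (Set.mem_univ W₂) (Set.mem_univ W₁)
    have h2 : |h W₁ - h W₂| ≤ C * ‖W₁ - W₂‖ := by
      simpa only [Real.norm_eq_abs] using hlip
    simpa only [hhdef] using h2
end
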